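/- arXiv:1910.08651 — 5 statements merged into one kernel-verified Lean document; each statement's English description precedes it below -/
import Mathlib

section
/- Let z ∈ ℂ^N with Re z_j > 0 for all j and let ν̲ = (ν₀, ν) ∈ ℂ × ℂ^n with Re ν₀ > 0. If the vector (Re ν_1/Re ν₀, …, Re ν_n/Re ν₀) lies in the interior (in ℝ^n) of the Newton polytope Δ_G = Conv{a_1, …, a_N}, then the function x ↦ x^{ν−1} G_z(x)^{−ν₀} is absolutely integrable on ℝ_{>0}^n. -/
open MeasureTheory Complex Finset


lemma my_integrable_exp_neg_mul_abs {b : ℝ} (hb : 0 < b) :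
    Integrable (fun t : ℝ => Real.exp (-b * |t|)) := by
  rw [← integrableOn_univ, ← Set.Iio_union_Ici (a := (0:ℝ)), integrableOn_union,
    integrableOn_Ici_iff_integrableOn_Ioi]
  constructor
  · rw [← (Measure.measurePreserving_neg (volume : Measure ℝ)).integrableOn_comp_preimage
      (Homeomorph.neg ℝ).measurableEmbedding]
    simp only [Function.comp_def, abs_neg, Set.neg_preimage, Set.neg_Iio, neg_zero]
    exact (exp_neg_integrableOn_Ioi 0 hb).congr_fun
      (fun t ht => by rw [abs_of_pos ht]) measurableSet_Ioi
  · exact (exp_neg_integrableOn_Ioi 0 hb).congr_fun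
      (fun t ht => by rw [abs_of_pos ht]) measurableSet_Ioi

lemma my_sign_mul (x : ℝ) : Real.sign x * x = |x| := by
  rcases lt_trichotomy x 0 with h | h | h
  · rw [Real.sign_of_neg h, abs_of_neg h]; ring
  · simp [h]
  · rw [Real.sign_of_pos h, abs_of_pos h]; ring

lemma my_abs_sign (x : ℝ) : |Real.sign x| ≤ 1 := by
  rcases Real.sign_apply_eq x with h | h | h <;> simp [h]

lemma my_cpow_norm_bound {w : ℂ} (hw : 0 < w.re) (s : ℂ) {r : ℝ} (hr : 0 < r)
    (hlb : r ≤ ‖w‖) (hs : 0 < s.re) :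
    ‖w ^ (-s)‖ ≤ r ^ (-s.re) * Real.exp (Real.pi / 2 * |s.im|) := by
  have hw0 : w ≠ 0 := fun h => by simp [h] at hw
  rw [Complex.norm_cpow_of_ne_zero hw0, div_eq_mul_inv, ← Real.exp_neg]
  have h1 : ‖w‖ ^ (-s).re ≤ r ^ (-s.re) := by
    rw [Complex.neg_re]
    exact Real.rpow_le_rpow_of_nonpos hr hlb (neg_nonpos.mpr hs.le)
  have h2 : Real.exp (-(w.arg * (-s).im)) ≤ Real.exp (Real.pi / 2 * |s.im|) := by
    apply Real.exp_le_exp.mpr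
    calc -(w.arg * (-s).im) = w.arg * s.im := by simp
      _ ≤ |w.arg * s.im| := le_abs_self _
      _ = |w.arg| * |s.im| := abs_mul _ _
      _ ≤ (Real.pi / 2) * |s.im| := by
          apply mul_le_mul_of_nonneg_right _ (abs_nonneg _)
          exact Complex.abs_arg_le_pi_div_two_iff.mpr hw.le
  exact mul_le_mul h1 h2 (Real.exp_pos _).le (Real.rpow_nonneg hr.le _)


lemma my_separation {n N : ℕ} (H : (Finset.univ : Finset (Fin N)).Nonempty)
    (a : Fin N → Fin n → ℕ) (μv : Fin n → ℝ) {ε : ℝ} (hε : 0 < ε)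
    (hball : Metric.ball μv ε ⊆
      convexHull ℝ (Set.range fun j : Fin N => fun i : Fin n => (a j i : ℝ)))
    (t : Fin n → ℝ) :
    (∑ i, μv i * t i) + ε / 2 * ∑ i, |t i| ≤
      Finset.univ.sup' H (fun j => ∑ i, (a j i : ℝ) * t i) := by
  set S := Finset.univ.sup' H (fun j => ∑ i, (a j i : ℝ) * t i) with hS
  have hconv : ∀ p ∈ convexHull ℝ (Set.range fun j : Fin N => fun i : Fin n => (a j i : ℝ)),
      ∑ i, p i * t i ≤ S := by
    have hlin : IsLinearMap ℝ (fun p : Fin n → ℝ => ∑ i, p i * t i) := by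
      constructor
      · intro x y; simp [add_mul, Finset.sum_add_distrib]
      · intro r x; simp [Finset.mul_sum, mul_assoc]
    intro p hp
    refine convexHull_min ?_ (convex_halfSpace_le hlin S) hp
    rintro _ ⟨j, rfl⟩
    exact Finset.le_sup' (fun j => ∑ i, (a j i : ℝ) * t i) (Finset.mem_univ j)
  set u : Fin n → ℝ := fun i => ε / 2 * Real.sign (t i) with hu
  have hunorm : ‖u‖ ≤ ε / 2 := by
    rw [pi_norm_le_iff_of_nonneg (by positivity)]
    intro i
    rw [Real.norm_eq_abs, hu, abs_mul, abs_of_pos (by positivity)]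
    calc ε / 2 * |Real.sign (t i)| ≤ ε / 2 * 1 := by
          exact mul_le_mul_of_nonneg_left (by
            rcases Real.sign_apply_eq (t i) with h | h | h <;> simp [h]) (by positivity)
      _ = ε / 2 := mul_one _
  have hmem : μv + u ∈ Metric.ball μv ε := by
    rw [Metric.mem_ball, dist_eq_norm, add_sub_cancel_left]
    linarith
  have h1 := hconv _ (hball hmem)
  have h2 : ∑ i, (μv + u) i * t i = (∑ i, μv i * t i) + ε / 2 * ∑ i, |t i| := by
    simp only [Pi.add_apply, add_mul, Finset.sum_add_distrib, hu]
    congr 1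
    rw [Finset.mul_sum]
    refine Finset.sum_congr rfl fun i _ => ?_
    rcases lt_trichotomy (t i) 0 with h | h | h
    · rw [Real.sign_of_neg h, abs_of_neg h]; ring
    · simp [h]
    · rw [Real.sign_of_pos h, abs_of_pos h]; ring
  linarith [h2 ▸ h1]

lemma my_hasFDerivAt {n : ℕ} (t : Fin n → ℝ) :
    HasFDerivAt (𝕜 := ℝ) (fun (t : Fin n → ℝ) (i : Fin n) => Real.exp (t i))
      (ContinuousLinearMap.pi fun i => Real.exp (t i) • ContinuousLinearMap.proj i) t := by
  apply hasFDerivAt_pi.2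
  intro i
  exact (Real.hasDerivAt_exp (t i)).comp_hasFDerivAt t (hasFDerivAt_apply (𝕜 := ℝ) i t)

lemma my_det {n : ℕ} (t : Fin n → ℝ) :
    (ContinuousLinearMap.pi fun i =>
      Real.exp (t i) • ContinuousLinearMap.proj (R := ℝ) (φ := fun _ : Fin n => ℝ) i).det
      = ∏ i, Real.exp (t i) := by
  have h : (ContinuousLinearMap.pi fun i =>
      Real.exp (t i) • ContinuousLinearMap.proj (R := ℝ) (φ := fun _ : Fin n => ℝ) i).toLinearMap
      = Matrix.toLin' (Matrix.diagonal fun i => Real.exp (t i)) := by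
    apply LinearMap.ext; intro v; funext i
    simp [Matrix.toLin'_apply, Matrix.mulVec_diagonal]
  rw [ContinuousLinearMap.det, h, LinearMap.det_toLin', Matrix.det_diagonal]

/-- Absolute convergence of the generalized Feynman integral: if `Re zⱼ > 0`,
`Re ν₀ > 0` and the vector `(Re ν₁/Re ν₀, …, Re ν_n/Re ν₀)` lies in the interior of
the Newton polytope `Conv{a₁, …, a_N}`, then `x ↦ x^{ν−1} G_z(x)^{−ν₀}` is absolutely
integrable on the open positive orthant. -/
theorem feynman_integral_convergence (n N : ℕ) (hn : 1 ≤ n) (hN : n + 1 ≤ N)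
    (a : Fin N → Fin n → ℕ)
    (z : Fin N → ℂ) (hz : ∀ j, 0 < (z j).re)
    (ν₀ : ℂ) (ν : Fin n → ℂ) (hν₀ : 0 < ν₀.re)
    (hmem : (fun i => (ν i).re / ν₀.re) ∈
      interior (convexHull ℝ (Set.range fun j : Fin N => fun i : Fin n => (a j i : ℝ)))) :
    IntegrableOn
      (fun x : Fin n → ℝ =>
        (∏ i, (x i : ℂ) ^ (ν i - 1)) *
          (∑ j, z j * ∏ i, (x i : ℂ) ^ (a j i)) ^ (-ν₀))
      {x : Fin n → ℝ | ∀ i, 0 < x i} volume := by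
  classical
  haveI : Nonempty (Fin N) := Fin.pos_iff_nonempty.mp (by omega)
  have H : (Finset.univ : Finset (Fin N)).Nonempty := Finset.univ_nonempty
  set τ := ν₀.re with hτdef
  set c := Finset.univ.inf' H (fun j => (z j).re) with hcdef
  have hc : 0 < c := (Finset.lt_inf'_iff H).mpr fun j _ => hz j
  obtain ⟨ε, hε, hball⟩ := Metric.mem_nhds_iff.mp (mem_interior_iff_mem_nhds.mp hmem)
  set Φ : (Fin n → ℝ) → (Fin n → ℝ) := fun t i => Real.exp (t i) with hΦ
  have himg : Φ '' Set.univ = {x : Fin n → ℝ | ∀ i, 0 < x i} := by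
    ext x
    constructor
    · rintro ⟨t, -, rfl⟩ i; exact Real.exp_pos _
    · intro hx
      exact ⟨fun i => Real.log (x i), Set.mem_univ _, funext fun i => Real.exp_log (hx i)⟩
  have hinj : Set.InjOn Φ Set.univ := fun s _ t _ hst =>
    funext fun i => Real.exp_injective (congrFun hst i)
  rw [show {x : Fin n → ℝ | ∀ i, 0 < x i} = Φ '' Set.univ from himg.symm,
    integrableOn_image_iff_integrableOn_abs_det_fderiv_smul volume MeasurableSet.univ
      (fun t _ => (my_hasFDerivAt t).hasFDerivWithinAt) hinj, integrableOn_univ]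
  -- notation
  set K := Real.exp (Real.pi / 2 * |ν₀.im|) with hKdef
  have hK : 0 < K := Real.exp_pos _
  have hb : 0 < τ * (ε / 2) := by positivity
  -- the dominating function
  have hbound0 : Integrable (fun t : Fin n → ℝ => ∏ i, Real.exp (-(τ * (ε / 2)) * |t i|)) :=
    Integrable.fintype_prod (f := fun _ : Fin n => fun s : ℝ => Real.exp (-(τ * (ε / 2)) * |s|))
      (fun _ => my_integrable_exp_neg_mul_abs hb)
  refine Integrable.mono' (g := fun t : Fin n → ℝ =>
      (c ^ (-τ) * K) * ∏ i, Real.exp (-(τ * (ε / 2)) * |t i|))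
    (hbound0.const_mul _) ?_ (Filter.Eventually.of_forall fun t => ?_)
  · -- measurability via continuity
    apply Continuous.aestronglyMeasurable
    simp only [my_det]
    have hGcont : Continuous fun t : Fin n → ℝ =>
        ∑ j, z j * ∏ i, ((Real.exp (t i) : ℂ)) ^ (a j i) := by
      refine continuous_finset_sum _ fun j _ => continuous_const.mul ?_
      exact continuous_finset_prod _ fun i _ =>
        (Complex.continuous_ofReal.comp (Real.continuous_exp.comp (continuous_apply i))).pow _
    have hGre : ∀ t : Fin n → ℝ,
        0 < (∑ j, z j * ∏ i, ((Real.exp (t i) : ℂ)) ^ (a j i)).re := by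
      intro t
      have hre : (∑ j, z j * ∏ i, ((Real.exp (t i) : ℂ)) ^ (a j i)).re
          = ∑ j, (z j).re * ∏ i, Real.exp (t i) ^ (a j i) := by
        rw [Complex.re_sum]
        refine Finset.sum_congr rfl fun j _ => ?_
        have : (∏ i, ((Real.exp (t i) : ℂ)) ^ (a j i))
            = ((∏ i, Real.exp (t i) ^ (a j i) : ℝ) : ℂ) := by push_cast; rfl
        rw [this, Complex.mul_re, Complex.ofReal_re, Complex.ofReal_im, mul_zero, sub_zero]
      rw [hre]
      exact Finset.sum_pos (fun j _ => mul_pos (hz j)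
        (Finset.prod_pos fun i _ => pow_pos (Real.exp_pos _) _)) H
    apply Continuous.smul
    · exact Complex.continuous_ofReal.comp (continuous_finset_prod _ fun i _ =>
        Real.continuous_exp.comp (continuous_apply i)).abs
    apply Continuous.mul
    · refine continuous_finset_prod _ fun i _ => ?_
      rw [continuous_iff_continuousAt]
      intro t
      refine ContinuousAt.cpow ?_ continuousAt_const ?_
      · exact (Complex.continuous_ofReal.comp
          (Real.continuous_exp.comp (continuous_apply i))).continuousAt
      · exact Complex.ofReal_mem_slitPlane.mpr (Real.exp_pos _)
    · rw [continuous_iff_continuousAt]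
      intro t
      exact ContinuousAt.cpow hGcont.continuousAt continuousAt_const
        (Complex.mem_slitPlane_iff.mpr (Or.inl (hGre t)))
  · -- the pointwise bound
    simp only [my_det, hΦ]
    have hD : 0 < ∏ i, Real.exp (t i) := Finset.prod_pos fun i _ => Real.exp_pos _
    rw [norm_smul, Real.norm_eq_abs, _root_.abs_abs (∏ i, Real.exp (t i)), abs_of_pos hD]
    set Lf : Fin N → ℝ := fun j => ∑ i, (a j i : ℝ) * t i with hLf
    set S := Finset.univ.sup' H Lf with hS
    set G : ℂ := ∑ j, z j * ∏ i, ((Real.exp (t i) : ℂ)) ^ (a j i) with hGdef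
    have hprod : ∀ j, (∏ i, ((Real.exp (t i) : ℂ)) ^ (a j i)) = ((Real.exp (Lf j) : ℝ) : ℂ) := by
      intro j
      have h1 : Real.exp (Lf j) = ∏ i, Real.exp (t i) ^ (a j i) := by
        rw [hLf, Real.exp_sum]
        exact Finset.prod_congr rfl fun i _ => Real.exp_nat_mul (t i) (a j i)
      rw [h1]; push_cast; rfl
    have hGre : G.re = ∑ j, (z j).re * Real.exp (Lf j) := by
      rw [hGdef, Complex.re_sum]
      refine Finset.sum_congr rfl fun j _ => ?_
      rw [hprod j, Complex.mul_re, Complex.ofReal_re, Complex.ofReal_im, mul_zero, sub_zero]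
    have hGrepos : 0 < G.re := by
      rw [hGre]
      exact Finset.sum_pos (fun j _ => mul_pos (hz j) (Real.exp_pos _)) H
    have hlb : c * Real.exp S ≤ ‖G‖ := by
      obtain ⟨j₀, -, hj₀⟩ := Finset.exists_mem_eq_sup' H Lf
      calc c * Real.exp S = c * Real.exp (Lf j₀) := by rw [hS, hj₀]
        _ ≤ (z j₀).re * Real.exp (Lf j₀) :=
            mul_le_mul_of_nonneg_right (Finset.inf'_le _ (Finset.mem_univ j₀)) (Real.exp_pos _).le
        _ ≤ ∑ j, (z j).re * Real.exp (Lf j) :=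
            Finset.single_le_sum (fun j _ => (mul_pos (hz j) (Real.exp_pos _)).le)
              (Finset.mem_univ j₀)
        _ = G.re := hGre.symm
        _ ≤ ‖G‖ := Complex.re_le_norm _
    have hnormB : ‖G ^ (-ν₀)‖ ≤ (c * Real.exp S) ^ (-τ) * K :=
      my_cpow_norm_bound hGrepos ν₀ (mul_pos hc (Real.exp_pos _)) hlb hν₀
    have hnormA : ‖∏ i, ((Real.exp (t i) : ℂ)) ^ (ν i - 1)‖
        = ∏ i, Real.exp (t i * ((ν i).re - 1)) := by
      rw [norm_prod]
      refine Finset.prod_congr rfl fun i _ => ?_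
      rw [Complex.norm_cpow_eq_rpow_re_of_pos (Real.exp_pos _),
        ← Real.exp_mul, Complex.sub_re, Complex.one_re]
    have key : (∏ i, Real.exp (t i)) * (∏ i, Real.exp (t i * ((ν i).re - 1)))
        = Real.exp (∑ i, t i * (ν i).re) := by
      calc (∏ i, Real.exp (t i)) * (∏ i, Real.exp (t i * ((ν i).re - 1)))
          = ∏ i, Real.exp (t i * (ν i).re) := by
            rw [← Finset.prod_mul_distrib]
            exact Finset.prod_congr rfl fun i _ => by rw [← Real.exp_add]; congr 1; ring
        _ = Real.exp (∑ i, t i * (ν i).re) := (Real.exp_sum _ _).symm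
    have hsep := my_separation H a (fun i => (ν i).re / ν₀.re) hε hball t
    calc (∏ i, Real.exp (t i)) * ‖(∏ i, ((Real.exp (t i) : ℂ)) ^ (ν i - 1)) * G ^ (-ν₀)‖
        = Real.exp (∑ i, t i * (ν i).re) * ‖G ^ (-ν₀)‖ := by
          rw [norm_mul, hnormA, ← mul_assoc, key]
      _ ≤ Real.exp (∑ i, t i * (ν i).re) * ((c * Real.exp S) ^ (-τ) * K) :=
          mul_le_mul_of_nonneg_left hnormB (Real.exp_pos _).le
      _ = (c ^ (-τ) * K) * Real.exp ((∑ i, t i * (ν i).re) + S * (-τ)) := by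
          rw [Real.mul_rpow hc.le (Real.exp_pos _).le, ← Real.exp_mul, Real.exp_add]; ring
      _ ≤ (c ^ (-τ) * K) * Real.exp (-(τ * (ε / 2)) * ∑ i, |t i|) := by
          apply mul_le_mul_of_nonneg_left _ (by positivity)
          apply Real.exp_le_exp.mpr
          have hsum : ∑ i, t i * (ν i).re = τ * ∑ i, ((ν i).re / ν₀.re) * t i := by
            rw [Finset.mul_sum]
            refine Finset.sum_congr rfl fun i _ => ?_
            rw [hτdef]
            field_simp
            exact (mul_inv_cancel_right₀ (ne_of_gt hν₀) _).symm
          rw [hsum]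
          nlinarith [mul_le_mul_of_nonneg_left hsep hν₀.le, Finset.sum_nonneg
            (fun i (_ : i ∈ Finset.univ) => abs_nonneg (t i))]
      _ = (c ^ (-τ) * K) * ∏ i, Real.exp (-(τ * (ε / 2)) * |t i|) := by
          rw [← Real.exp_sum, ← Finset.mul_sum]
end

section
/- Let z ∈ ℂ^N with Re z_j > 0 for all j. If the affine span of the exponent vectors {a_1, …, a_N} is a proper affine subspace of ℝ^n (equivalently, the Newton polytope Δ_G is not full-dimensional, i.e. its interior in ℝ^n is empty), then for every choice of ν̲ = (ν₀, ν) ∈ ℂ × ℂ^n the function x ↦ x^{ν−1} G_z(x)^{−ν₀} is NOT absolutely integrable on ℝ_{>0}^n. -/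
open MeasureTheory Complex Finset

lemma aux_rpow_lower {e x r : ℝ} (he : 0 < e) (h1 : e ≤ x) (h2 : x ≤ 2 * e) :
    min 1 ((2:ℝ) ^ r) * e ^ r ≤ x ^ r := by
  have hx : 0 < x := lt_of_lt_of_le he h1
  rcases le_or_gt 0 r with hr | hr
  · calc min 1 ((2:ℝ) ^ r) * e ^ r ≤ 1 * e ^ r := by
          exact mul_le_mul_of_nonneg_right (min_le_left _ _) (Real.rpow_nonneg he.le r)
    _ = e ^ r := one_mul _
    _ ≤ x ^ r := Real.rpow_le_rpow he.le h1 hr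
  · calc min 1 ((2:ℝ) ^ r) * e ^ r ≤ (2:ℝ) ^ r * e ^ r := by
          exact mul_le_mul_of_nonneg_right (min_le_right _ _) (Real.rpow_nonneg he.le r)
    _ = (2 * e) ^ r := (Real.mul_rpow (by norm_num) he.le).symm
    _ ≤ x ^ r := Real.rpow_le_rpow_of_nonpos hx h2 hr.le

lemma aux_rpow_bracket {L U g E ρ : ℝ} (hL : 0 < L) (hU : 0 < U) (hE : 0 < E)
    (h1 : L * E ≤ g) (h2 : g ≤ U * E) :
    min (L ^ ρ) (U ^ ρ) * E ^ ρ ≤ g ^ ρ := by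
  have hg : 0 < g := lt_of_lt_of_le (by positivity) h1
  rcases le_or_gt 0 ρ with hr | hr
  · calc min (L ^ ρ) (U ^ ρ) * E ^ ρ ≤ L ^ ρ * E ^ ρ :=
          mul_le_mul_of_nonneg_right (min_le_left _ _) (Real.rpow_nonneg hE.le ρ)
    _ = (L * E) ^ ρ := (Real.mul_rpow hL.le hE.le).symm
    _ ≤ g ^ ρ := Real.rpow_le_rpow (by positivity) h1 hr
  · calc min (L ^ ρ) (U ^ ρ) * E ^ ρ ≤ U ^ ρ * E ^ ρ :=
          mul_le_mul_of_nonneg_right (min_le_right _ _) (Real.rpow_nonneg hE.le ρ)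
    _ = (U * E) ^ ρ := (Real.mul_rpow hU.le hE.le).symm
    _ ≤ g ^ ρ := Real.rpow_le_rpow_of_nonpos hg h2 hr.le

lemma aux_disjoint {s : ℝ} (hs : s = Real.log 4 ∨ s = -Real.log 4) {k l : ℕ} (hkl : k ≠ l) :
    Disjoint (Set.Icc (Real.exp (k * s)) (2 * Real.exp (k * s)))
      (Set.Icc (Real.exp (l * s)) (2 * Real.exp (l * s))) := by
  have key : ∀ p q : ℕ, p < q → s = Real.log 4 ∨ s = -Real.log 4 →
      (2 * Real.exp (p * s) < Real.exp (q * s)) ∨ (2 * Real.exp (q * s) < Real.exp (p * s)) := by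
    intro p q hpq hs
    rcases hs with h | h
    · left
      have h4 : Real.exp s = 4 := by rw [h, Real.exp_log]; norm_num
      have : Real.exp (q * s) = Real.exp (p * s) * Real.exp ((q - p : ℝ) * s) := by
        rw [← Real.exp_add]; ring_nf
      rw [this]
      have h1 : Real.exp s ≤ Real.exp ((q - p : ℝ) * s) := by
        apply Real.exp_le_exp.mpr
        have : (1:ℝ) ≤ (q:ℝ) - p := by
          have : (p:ℝ) + 1 ≤ q := by exact_mod_cast hpq
          linarith
        have hlp : 0 < s := h ▸ Real.log_pos (by norm_num)
        nlinarith
      have hp := Real.exp_pos (p * s)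
      nlinarith [h4 ▸ h1]
    · right
      have h4 : Real.exp (-s) = 4 := by rw [h, neg_neg, Real.exp_log]; norm_num
      have : Real.exp (p * s) = Real.exp (q * s) * Real.exp ((q - p : ℝ) * (-s)) := by
        rw [← Real.exp_add]; ring_nf
      rw [this]
      have h1 : Real.exp (-s) ≤ Real.exp ((q - p : ℝ) * (-s)) := by
        apply Real.exp_le_exp.mpr
        have h2 : (1:ℝ) ≤ (q:ℝ) - p := by
          have : (p:ℝ) + 1 ≤ q := by exact_mod_cast hpq
          linarith
        have h3 : 0 < -s := by rw [h, neg_neg]; exact Real.log_pos (by norm_num)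
        nlinarith
      have hp := Real.exp_pos (q * s)
      nlinarith [h4 ▸ h1]
  rw [Set.disjoint_iff_inter_eq_empty, Set.eq_empty_iff_forall_notMem]
  rintro x ⟨⟨ha1, ha2⟩, ⟨hb1, hb2⟩⟩
  rcases lt_or_gt_of_ne hkl with h | h
  · rcases key k l h hs with hlt | hlt <;> linarith
  · rcases key l k h hs with hlt | hlt <;> linarith

lemma aux_hyperplane (n N : ℕ) (hN : 1 ≤ N) (a : Fin N → Fin n → ℕ)
    (hdeg : affineSpan ℝ (Set.range fun j : Fin N => fun i : Fin n => (a j i : ℝ)) ≠ ⊤) :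
    ∃ c : Fin n → ℝ, ∃ b : ℝ, (∃ i0, c i0 ≠ 0) ∧ ∀ j, ∑ i, c i * (a j i : ℝ) = b := by
  set A : Fin N → Fin n → ℝ := fun j i => (a j i : ℝ) with hA
  have hne : (Set.range A).Nonempty := ⟨A ⟨0, by omega⟩, Set.mem_range_self _⟩
  have hvs : vectorSpan ℝ (Set.range A) ≠ ⊤ := fun h =>
    hdeg ((AffineSubspace.affineSpan_eq_top_iff_vectorSpan_eq_top_of_nonempty ℝ _ _ hne).mpr h)
  obtain ⟨φ, hφ0, hφ⟩ := Submodule.exists_dual_map_eq_bot_of_lt_top hvs.lt_top inferInstance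
  have hker : ∀ v ∈ vectorSpan ℝ (Set.range A), φ v = 0 := by
    intro v hv
    have : φ v ∈ Submodule.map φ (vectorSpan ℝ (Set.range A)) := Submodule.mem_map_of_mem hv
    rwa [hφ, Submodule.mem_bot] at this
  set c : Fin n → ℝ := fun i => φ (fun j => if i = j then 1 else 0) with hc
  have hφeq : ∀ x : Fin n → ℝ, φ x = ∑ i, x i * c i := by
    intro x
    rw [LinearMap.pi_apply_eq_sum_univ]
    simp [hc, smul_eq_mul]
  refine ⟨c, φ (A ⟨0, by omega⟩), ?_, ?_⟩
  · by_contra h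
    push_neg at h
    apply hφ0
    apply LinearMap.ext
    intro x
    rw [hφeq]
    simp [h]
  · intro j
    have hmem : A j -ᵥ A ⟨0, by omega⟩ ∈ vectorSpan ℝ (Set.range A) :=
      vsub_mem_vectorSpan ℝ (Set.mem_range_self _) (Set.mem_range_self _)
    have := hker _ hmem
    have h2 : φ (A j) - φ (A ⟨0, by omega⟩) = 0 := by
      rw [← map_sub]; exact this
    have h3 : φ (A j) = φ (A ⟨0, by omega⟩) := by linarith
    rw [← h3, hφeq]
    exact Finset.sum_congr rfl fun i _ => mul_comm _ _

/-- Degenerate Newton polytope: if the affine span of the exponent vectors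
`a₁, …, a_N` is a proper affine subspace of `ℝⁿ`, then for no choice of
`ν̲ = (ν₀, ν)` is `x ↦ x^{ν−1} G_z(x)^{−ν₀}` absolutely integrable on the open
positive orthant (with `Re zⱼ > 0`). -/
theorem no_convergence_of_degenerate_polytope (n N : ℕ) (hn : 1 ≤ n) (hN : n + 1 ≤ N)
    (a : Fin N → Fin n → ℕ)
    (z : Fin N → ℂ) (hz : ∀ j, 0 < (z j).re)
    (hdeg : affineSpan ℝ (Set.range fun j : Fin N => fun i : Fin n => (a j i : ℝ)) ≠ ⊤) :
    ∀ (ν₀ : ℂ) (ν : Fin n → ℂ),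
      ¬ IntegrableOn
        (fun x : Fin n → ℝ =>
          (∏ i, (x i : ℂ) ^ (ν i - 1)) *
            (∑ j, z j * ∏ i, (x i : ℂ) ^ (a j i)) ^ (-ν₀))
        {x : Fin n → ℝ | ∀ i, 0 < x i} volume := by
  intro ν₀ ν hint
  obtain ⟨c, b, ⟨i0, hi0⟩, hcb⟩ := aux_hyperplane n N (by omega) a hdeg
  set f : (Fin n → ℝ) → ℂ := fun x =>
    (∏ i, (x i : ℂ) ^ (ν i - 1)) *
      (∑ j, z j * ∏ i, (x i : ℂ) ^ (a j i)) ^ (-ν₀) with hf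
  set r : Fin n → ℝ := fun i => (ν i).re - 1 with hr
  set α : ℝ := (∑ i, c i * (ν i).re) - b * ν₀.re with hα
  set β : ℝ := if 0 ≤ α / c i0 then Real.log 4 / c i0 else -(Real.log 4 / c i0) with hβ
  have hβc : β * c i0 = Real.log 4 ∨ β * c i0 = -Real.log 4 := by
    rw [hβ]
    split_ifs with h
    · left; field_simp
    · right; field_simp
  have hβα : 0 ≤ β * α := by
    have hl4 : 0 < Real.log 4 := Real.log_pos (by norm_num)
    rw [hβ]
    split_ifs with h
    · have he : Real.log 4 / c i0 * α = Real.log 4 * (α / c i0) := by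
        field_simp
      rw [he]
      exact mul_nonneg hl4.le h
    · push_neg at h
      have he : -(Real.log 4 / c i0) * α = -(Real.log 4 * (α / c i0)) := by
        field_simp
      rw [he]
      nlinarith
  set E : ℕ → Fin n → ℝ := fun k i => Real.exp (k * (β * c i)) with hE
  set B : ℕ → Set (Fin n → ℝ) := fun k => Set.Icc (E k) (fun i => 2 * E k i) with hB
  set C1 : ℝ := ∏ i, min 1 ((2:ℝ) ^ (r i)) with hC1
  set L : ℝ := ∑ j, (z j).re with hL
  set U : ℝ := ∑ j, ‖z j‖ * ∏ i, (2:ℝ) ^ (a j i) with hU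
  set ρ : ℝ := -ν₀.re with hρ
  set M : ℝ := min (L ^ ρ) (U ^ ρ) with hM
  set C3 : ℝ := Real.exp (-(Real.pi / 2 * |ν₀.im|)) with hC3
  set C : ℝ := C1 * M * C3 with hC
  have hNempty : (univ : Finset (Fin N)).Nonempty := ⟨⟨0, by omega⟩, mem_univ _⟩
  have hLpos : 0 < L := Finset.sum_pos (fun j _ => hz j) hNempty
  have hUpos : 0 < U := Finset.sum_pos (fun j _ => by
    have : 0 < ‖z j‖ := by
      rw [norm_pos_iff]
      intro h0
      simpa [h0] using hz j
    positivity) hNempty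
  have hC1pos : 0 < C1 := Finset.prod_pos fun i _ => lt_min one_pos (Real.rpow_pos_of_pos two_pos _)
  have hMpos : 0 < M := lt_min (Real.rpow_pos_of_pos hLpos _) (Real.rpow_pos_of_pos hUpos _)
  have hCpos : 0 < C := by positivity
  set γ : ℝ := α - ∑ i, c i with hγ
  -- the key pointwise lower bound
  have hbound : ∀ (k : ℕ), ∀ x ∈ B k, C * Real.exp (k * (β * γ)) ≤ ‖f x‖ := by
    intro k x hx
    simp only [hf]
    set G : ℂ := ∑ j, z j * ∏ i, (x i : ℂ) ^ (a j i) with hG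
    have hlo : ∀ i, E k i ≤ x i := hx.1
    have hhi : ∀ i, x i ≤ 2 * E k i := hx.2
    have hEpos : ∀ i, 0 < E k i := fun i => Real.exp_pos _
    have hxpos : ∀ i, 0 < x i := fun i => lt_of_lt_of_le (hEpos i) (hlo i)
    -- Part A : the monomial prefactor
    have hA : ‖∏ i, (x i : ℂ) ^ (ν i - 1)‖ = ∏ i, (x i) ^ (r i) := by
      rw [norm_prod]
      refine Finset.prod_congr rfl fun i _ => ?_
      rw [Complex.norm_cpow_eq_rpow_re_of_pos (hxpos i)]
      simp [hr]
    have hEr : ∏ i, (E k i) ^ (r i) = Real.exp (k * (β * ∑ i, c i * r i)) := by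
      have h1 : ∀ i : Fin n, (E k i) ^ (r i) = Real.exp ((k * (β * c i)) * r i) := fun i => by
        simp only [hE]
        rw [← Real.exp_mul]
      rw [Finset.prod_congr rfl (fun i _ => h1 i), ← Real.exp_sum]
      congr 1
      rw [Finset.mul_sum, Finset.mul_sum]
      exact Finset.sum_congr rfl fun i _ => by ring
    have hAlow : C1 * Real.exp (k * (β * ∑ i, c i * r i)) ≤ ∏ i, (x i) ^ (r i) := by
      calc C1 * Real.exp (k * (β * ∑ i, c i * r i))
          = ∏ i, (min 1 ((2:ℝ) ^ (r i)) * (E k i) ^ (r i)) := by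
            rw [Finset.prod_mul_distrib, hEr]
      _ ≤ ∏ i, (x i) ^ (r i) := by
            refine Finset.prod_le_prod (fun i _ => ?_) (fun i _ => ?_)
            · have : 0 < min 1 ((2:ℝ) ^ (r i)) := lt_min one_pos (Real.rpow_pos_of_pos two_pos _)
              positivity
            · exact aux_rpow_lower (hEpos i) (hlo i) (hhi i)
    -- Part B : the G factor
    have hP : ∀ j, ((∏ i, x i ^ (a j i) : ℝ) : ℂ) = ∏ i, (x i : ℂ) ^ (a j i) := fun j => by
      push_cast
      rfl
    have hGre : G.re = ∑ j, (z j).re * ∏ i, x i ^ (a j i) := by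
      rw [hG, Complex.re_sum]
      refine Finset.sum_congr rfl fun j _ => ?_
      rw [← hP j, Complex.mul_re, Complex.ofReal_re, Complex.ofReal_im]
      ring
    have hPpos : ∀ j, 0 < ∏ i, x i ^ (a j i) := fun j =>
      Finset.prod_pos fun i _ => pow_pos (hxpos i) _
    have hGrepos : 0 < G.re := by
      rw [hGre]
      exact Finset.sum_pos (fun j _ => mul_pos (hz j) (hPpos j)) hNempty
    have hGne : G ≠ 0 := fun h => by rw [h] at hGrepos; simp at hGrepos
    have hEP : ∀ j : Fin N, ∏ i, (E k i) ^ (a j i) = Real.exp (k * (β * b)) := by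
      intro j
      have h1 : ∀ i : Fin n, (E k i) ^ (a j i) = Real.exp ((a j i) * (k * (β * c i))) :=
        fun i => by simp only [hE]; exact (Real.exp_nat_mul _ _).symm
      rw [Finset.prod_congr rfl (fun i _ => h1 i), ← Real.exp_sum]
      congr 1
      rw [← hcb j, Finset.mul_sum, Finset.mul_sum]
      exact Finset.sum_congr rfl fun i _ => by push_cast; ring
    have hPlow : ∀ j : Fin N, Real.exp (k * (β * b)) ≤ ∏ i, x i ^ (a j i) := by
      intro j
      rw [← hEP j]
      exact Finset.prod_le_prod (fun i _ => pow_nonneg (hEpos i).le _)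
        (fun i _ => pow_le_pow_left₀ (hEpos i).le (hlo i) _)
    have hPhigh : ∀ j : Fin N,
        ∏ i, x i ^ (a j i) ≤ (∏ i, (2:ℝ) ^ (a j i)) * Real.exp (k * (β * b)) := by
      intro j
      calc ∏ i, x i ^ (a j i) ≤ ∏ i, (2 * E k i) ^ (a j i) :=
            Finset.prod_le_prod (fun i _ => pow_nonneg (hxpos i).le _)
              (fun i _ => pow_le_pow_left₀ (hxpos i).le (hhi i) _)
      _ = (∏ i, (2:ℝ) ^ (a j i)) * ∏ i, (E k i) ^ (a j i) := by
            rw [← Finset.prod_mul_distrib]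
            exact Finset.prod_congr rfl fun i _ => mul_pow _ _ _
      _ = (∏ i, (2:ℝ) ^ (a j i)) * Real.exp (k * (β * b)) := by rw [hEP j]
    have hGabs_low : L * Real.exp (k * (β * b)) ≤ ‖G‖ := by
      refine le_trans ?_ (Complex.re_le_norm G)
      rw [hGre, hL, Finset.sum_mul]
      exact Finset.sum_le_sum fun j _ => mul_le_mul_of_nonneg_left (hPlow j) (hz j).le
    have hGabs_high : ‖G‖ ≤ U * Real.exp (k * (β * b)) := by
      calc ‖G‖ ≤ ∑ j, ‖z j * ∏ i, (x i : ℂ) ^ (a j i)‖ :=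
            norm_sum_le _ _
      _ = ∑ j, ‖z j‖ * ∏ i, x i ^ (a j i) := by
            refine Finset.sum_congr rfl fun j _ => ?_
            rw [norm_mul, ← hP j, Complex.norm_real, Real.norm_eq_abs, abs_of_pos (hPpos j)]
      _ ≤ ∑ j, ‖z j‖ * ((∏ i, (2:ℝ) ^ (a j i)) * Real.exp (k * (β * b))) :=
            Finset.sum_le_sum fun j _ =>
              mul_le_mul_of_nonneg_left (hPhigh j) (norm_nonneg _)
      _ = U * Real.exp (k * (β * b)) := by
            rw [hU, Finset.sum_mul]
            exact Finset.sum_congr rfl fun j _ => by ring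
    have hGrpow : M * Real.exp (k * (β * b)) ^ ρ ≤ ‖G‖ ^ ρ :=
      aux_rpow_bracket hLpos hUpos (Real.exp_pos _) hGabs_low hGabs_high
    have harg : |Complex.arg G| ≤ Real.pi / 2 :=
      le_of_lt (Complex.abs_arg_lt_pi_div_two_iff.mpr (Or.inl hGrepos))
    have hargmul : -(Real.pi / 2 * |ν₀.im|) ≤ Complex.arg G * ν₀.im := by
      have h1 : |Complex.arg G * ν₀.im| ≤ Real.pi / 2 * |ν₀.im| := by
        rw [abs_mul]
        exact mul_le_mul_of_nonneg_right harg (abs_nonneg _)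
      linarith [neg_abs_le (Complex.arg G * ν₀.im)]
    have hBabs : M * Real.exp (k * (β * b)) ^ ρ * C3 ≤ ‖G ^ (-ν₀)‖ := by
      rw [Complex.norm_cpow_of_ne_zero hGne]
      have h1 : (-ν₀).re = ρ := by simp [hρ]
      have h2 : Complex.arg G * (-ν₀).im = -(Complex.arg G * ν₀.im) := by
        simp
      rw [h1, h2, Real.exp_neg, div_eq_mul_inv, inv_inv]
      have h3 : C3 ≤ Real.exp (Complex.arg G * ν₀.im) := by
        rw [hC3]
        exact Real.exp_le_exp.mpr hargmul
      have h5 : 0 ≤ ‖G‖ ^ ρ := Real.rpow_nonneg (norm_nonneg _) _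
      have h6 : 0 ≤ C3 := le_of_lt (by rw [hC3]; exact Real.exp_pos _)
      exact mul_le_mul hGrpow h3 h6 h5
    -- combine
    have hnorm : ‖(∏ i, (x i : ℂ) ^ (ν i - 1)) * G ^ (-ν₀)‖
        = (∏ i, x i ^ (r i)) * ‖G ^ (-ν₀)‖ := by
      rw [norm_mul, hA]
    rw [hnorm]
    have hsumr : ∑ i, c i * r i = (∑ i, c i * (ν i).re) - ∑ i, c i := by
      simp only [hr]
      rw [← Finset.sum_sub_distrib]
      exact Finset.sum_congr rfl fun i _ => by ring
    have hexp : Real.exp (k * (β * γ))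
        = Real.exp (k * (β * ∑ i, c i * r i)) * Real.exp (k * (β * b)) ^ ρ := by
      rw [← Real.exp_mul, ← Real.exp_add]
      congr 1
      rw [hsumr, hγ, hα, hρ]
      ring
    calc C * Real.exp (k * (β * γ))
        = (C1 * Real.exp (k * (β * ∑ i, c i * r i)))
            * (M * Real.exp (k * (β * b)) ^ ρ * C3) := by
          rw [hC, hexp]
          ring
    _ ≤ (∏ i, x i ^ (r i)) * ‖G ^ (-ν₀)‖ := by
          refine mul_le_mul hAlow hBabs ?_ ?_
          · exact mul_nonneg (mul_nonneg hMpos.le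
              (Real.rpow_nonneg (Real.exp_pos _).le _))
              (le_of_lt (by rw [hC3]; exact Real.exp_pos _))
          · exact Finset.prod_nonneg fun i _ => Real.rpow_nonneg (hxpos i).le _
  -- measure of boxes
  have hvol : ∀ k : ℕ, volume (B k) = ENNReal.ofReal (Real.exp (k * (β * ∑ i, c i))) := by
    intro k
    rw [hB]
    simp only [Real.volume_Icc_pi]
    have : ∀ i : Fin n, (2:ℝ) * E k i - E k i = E k i := fun i => by ring
    calc (∏ i, ENNReal.ofReal (2 * E k i - E k i)) = ∏ i, ENNReal.ofReal (E k i) := by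
          exact Finset.prod_congr rfl fun i _ => by rw [this]
    _ = ENNReal.ofReal (∏ i, E k i) :=
          (ENNReal.ofReal_prod_of_nonneg fun i _ => (Real.exp_pos _).le).symm
    _ = ENNReal.ofReal (Real.exp (k * (β * ∑ i, c i))) := by
          rw [← Real.exp_sum]
          congr 1
          rw [Finset.mul_sum, Finset.mul_sum]
  have hmeas : ∀ k : ℕ, MeasurableSet (B k) := fun k => measurableSet_Icc
  have hsub : (⋃ k, B k) ⊆ {x : Fin n → ℝ | ∀ i, 0 < x i} := by
    rintro x ⟨_, ⟨k, rfl⟩, hx⟩ i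
    exact lt_of_lt_of_le (Real.exp_pos _) (hx.1 i)
  have hdisj : Pairwise (Function.onFun Disjoint B) := by
    intro k l hkl
    have hd := aux_disjoint (s := β * c i0) hβc hkl
    rw [Function.onFun, Set.disjoint_left]
    intro x hxk hxl
    have h1 : x i0 ∈ Set.Icc (Real.exp (k * (β * c i0))) (2 * Real.exp (k * (β * c i0))) :=
      ⟨hxk.1 i0, hxk.2 i0⟩
    have h2 : x i0 ∈ Set.Icc (Real.exp (l * (β * c i0))) (2 * Real.exp (l * (β * c i0))) :=
      ⟨hxl.1 i0, hxl.2 i0⟩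
    exact Set.disjoint_left.mp hd h1 h2
  -- per-box lower bound on the lintegral
  have hkey : ∀ k : ℕ, ENNReal.ofReal C ≤ ∫⁻ x in B k, ‖f x‖₊ ∂volume := by
    intro k
    have h1 : ∫⁻ x in B k, ENNReal.ofReal (C * Real.exp (k * (β * γ))) ∂volume
        ≤ ∫⁻ x in B k, ‖f x‖₊ ∂volume := by
      apply setLIntegral_mono' (hmeas k)
      intro x hx
      rw [← enorm_eq_nnnorm, ← ofReal_norm]
      exact ENNReal.ofReal_le_ofReal (hbound k x hx)
    refine le_trans ?_ h1
    rw [setLIntegral_const, hvol]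
    rw [← ENNReal.ofReal_mul (by positivity)]
    apply ENNReal.ofReal_le_ofReal
    have h2 : Real.exp (k * (β * γ)) * Real.exp (k * (β * ∑ i, c i))
        = Real.exp (k * (β * α)) := by
      rw [← Real.exp_add]
      congr 1
      rw [hγ]
      ring
    have h3 : (1:ℝ) ≤ Real.exp (k * (β * α)) := by
      rw [← Real.exp_zero]
      exact Real.exp_le_exp.mpr (by positivity)
    calc C = C * 1 := by ring
    _ ≤ C * (Real.exp (k * (β * γ)) * Real.exp (k * (β * ∑ i, c i))) := by
        rw [h2]; exact mul_le_mul_of_nonneg_left h3 hCpos.le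
    _ = C * Real.exp (k * (β * γ)) * Real.exp (k * (β * ∑ i, c i)) := by ring
  -- conclude
  have hfin : (∫⁻ x, ‖f x‖₊ ∂(volume.restrict {x : Fin n → ℝ | ∀ i, 0 < x i})) < ⊤ :=
    hint.hasFiniteIntegral
  have htop : (⊤ : ENNReal) ≤ ∫⁻ x, ‖f x‖₊ ∂(volume.restrict {x : Fin n → ℝ | ∀ i, 0 < x i}) := by
    calc (⊤ : ENNReal) = ∑' _ : ℕ, ENNReal.ofReal C :=
          (ENNReal.tsum_const_eq_top_of_ne_zero (by simp [hCpos])).symm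
    _ ≤ ∑' k : ℕ, ∫⁻ x in B k, ‖f x‖₊ ∂volume := ENNReal.tsum_le_tsum hkey
    _ = ∫⁻ x in ⋃ k, B k, ‖f x‖₊ ∂volume := (lintegral_iUnion hmeas hdisj _).symm
    _ ≤ _ := lintegral_mono_set hsub
  exact absurd (lt_of_le_of_lt htop hfin) (lt_irrefl _)
end

section
/- Let z ∈ ℂ^N with Re z_j > 0 for all j, and let ν̲ = (ν₀, ν) with Re ν₀ > 0 and (Re ν_1/Re ν₀, …, Re ν_n/Re ν₀) in the interior of the full-dimensional Newton polytope Δ_G. Then for each j ∈ {1, …, N}, the function w ↦ J_A(ν̲, (z_1, …, z_{j−1}, w, z_{j+1}, …, z_N)) is complex-differentiable at w = z_j with derivative −J_A(ν̲ + (1, a_j), z); that is, ∂J_A(ν̲, z)/∂z_j = −J_A((ν₀+1, ν+a_j), z), where both generalized Feynman integrals converge absolutely. -/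
/-!
In logarithmic coordinates `x = exp t` the integrand of `J_A(ν̲, z)` is dominated by
`exp (⟨Re ν, t⟩ - Re ν₀ · maxⱼ ⟨aⱼ, t⟩)`, and because `Re ν / Re ν₀` lies in the interior of
the Newton polytope this exponent is at most `-ε ‖t‖₁`: the integral converges absolutely.
Replacing `(ν₀, ν)` by `(ν₀ + 1, ν + aⱼ)` moves that point towards the vertex `aⱼ`, so it stays
in the interior, and the same bound, uniform for `zⱼ` in a small disc, dominates the
`zⱼ`-derivative of the integrand. Differentiation under the integral sign and
`Γ(ν₀ + 1) = ν₀ Γ(ν₀)` conclude.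
-/

open MeasureTheory Real Set Finset

variable {ι κ : Type*}

def posOrthant (κ : Type*) : Set (κ → ℝ) := {x | ∀ i, 0 < x i}

theorem posOrthant_eq_image_exp :
    posOrthant κ = (fun t : κ → ℝ => fun i => rexp (t i)) '' univ := by
  ext x
  refine ⟨fun hx => ⟨fun i => Real.log (x i), trivial, funext fun i => exp_log (hx i)⟩, ?_⟩
  rintro ⟨t, -, rfl⟩ i
  exact exp_pos _

def newtonPolytope (a : ι → κ → ℕ) : Set (κ → ℝ) :=
  convexHull ℝ (Set.range fun j i => (a j i : ℝ))

theorem nonempty_of_mem_interior_newtonPolytope {a : ι → κ → ℕ} {p : κ → ℝ}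
    (hp : p ∈ interior (newtonPolytope a)) : Nonempty ι :=
  Set.range_nonempty_iff_nonempty.1 <| convexHull_nonempty_iff.1 ⟨p, interior_subset hp⟩

theorem mem_interior_newtonPolytope_add {a : ι → κ → ℕ} {p : κ → ℝ} {β : ℝ} (hβ : 0 < β)
    (hp : (fun i => p i / β) ∈ interior (newtonPolytope a)) (j : ι) :
    (fun i => (p i + a j i) / (β + 1)) ∈ interior (newtonPolytope a) := by
  have hpt : (fun i => (p i + a j i) / (β + 1)) =
      (β / (β + 1)) • (fun i => p i / β) + (1 / (β + 1)) • fun i => (a j i : ℝ) := by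
    ext i
    simp only [Pi.add_apply, Pi.smul_apply, smul_eq_mul]
    field_simp
  rw [hpt]
  exact (convex_convexHull ℝ _).combo_interior_closure_mem_interior hp
    (subset_closure (subset_convexHull ℝ _ ⟨j, rfl⟩)) (by positivity) (by positivity)
    (by field_simp)

def InConvergenceRegion (a : ι → κ → ℕ) (ν : κ → ℂ) (ν₀ : ℂ) : Prop :=
  0 < ν₀.re ∧ (fun i => (ν i).re / ν₀.re) ∈ interior (newtonPolytope a)

theorem InConvergenceRegion.add_exponent {a : ι → κ → ℕ} {ν : κ → ℂ} {ν₀ : ℂ}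
    (h : InConvergenceRegion a ν ν₀) (j : ι) :
    InConvergenceRegion a (ν + fun i => (a j i : ℂ)) (ν₀ + 1) := by
  refine ⟨by simpa using h.1.trans (lt_add_one _), ?_⟩
  simpa using mem_interior_newtonPolytope_add h.1 h.2 j

theorem exists_pos_forall_le_of_forall_pos [Finite ι] {f : ι → ℝ} (hf : ∀ j, 0 < f j) :
    ∃ r > 0, ∀ j, r ≤ f j :=
  ((eventually_mem_nhdsWithin (s := Ioi (0 : ℝ))).and <| Filter.eventually_all.2 fun j =>
    (eventually_le_nhds (hf j)).filter_mono nhdsWithin_le_nhds).exists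

theorem le_re_update_of_mem_ball [DecidableEq ι] {c : ι → ℂ} {r : ℝ} (hr : 0 ≤ r)
    (hc : ∀ k, r ≤ (c k).re) {j : ι} {w : ℂ} (hw : w ∈ Metric.ball (c j) (r / 2)) (k : ι) :
    r / 2 ≤ (Function.update c j w k).re := by
  rcases eq_or_ne k j with rfl | hk
  · have := (Complex.abs_re_le_norm (w - c k)).trans_lt (mem_ball_iff_norm.1 hw)
    rw [Complex.sub_re, abs_lt] at this
    rw [Function.update_self]
    linarith [hc k]
  · rw [Function.update_of_ne hk]
    linarith [hc k]

open Complex in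
theorem norm_cpow_neg_le_of_le_re {G μ : ℂ} {r : ℝ} (hr : 0 < r) (hG : r ≤ G.re)
    (hμ : 0 ≤ μ.re) : ‖G ^ (-μ)‖ ≤ rexp (π / 2 * |μ.im|) * r ^ (-μ.re) := by
  have hGre : 0 < G.re := hr.trans_le hG
  have hG0 : G ≠ 0 := fun h => by simp [h] at hGre
  rw [norm_cpow_of_ne_zero hG0, div_eq_mul_inv, ← Real.exp_neg, neg_re, neg_im, mul_comm]
  refine mul_le_mul ?_ (rpow_le_rpow_of_nonpos hr (hG.trans (re_le_norm G)) (neg_nonpos.2 hμ))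
    (by positivity) (by positivity)
  rw [exp_le_exp]
  calc -(G.arg * -μ.im) = G.arg * μ.im := by ring
    _ ≤ |G.arg| * |μ.im| := by rw [← abs_mul]; exact le_abs_self _
    _ ≤ π / 2 * |μ.im| := by gcongr; exact abs_arg_le_pi_div_two_iff.2 hGre.le

theorem integrable_exp_neg_mul_abs {c : ℝ} (hc : 0 < c) :
    Integrable fun t : ℝ => rexp (-c * |t|) := by
  rw [← integrableOn_univ, ← Iic_union_Ioi (a := 0), integrableOn_union]
  constructor
  · refine (integrableOn_exp_mul_Iic hc 0).congr_fun (fun t ht => ?_) measurableSet_Iic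
    simp [abs_of_nonpos (show t ≤ 0 from ht)]
  · refine (integrableOn_exp_mul_Ioi (neg_lt_zero.2 hc) 0).congr_fun (fun t ht => ?_)
      measurableSet_Ioi
    rw [abs_of_pos ht]

variable [Fintype κ]

theorem isOpen_posOrthant : IsOpen (posOrthant κ) := by
  simp only [posOrthant, ofPred_forall]
  exact isOpen_iInter_of_finite fun i => isOpen_lt continuous_const (continuous_apply i)

theorem det_pi_smul_proj [DecidableEq κ] (d : κ → ℝ) :
    (ContinuousLinearMap.pi fun i =>
      d i • (ContinuousLinearMap.proj i : (κ → ℝ) →L[ℝ] ℝ)).det = ∏ i, d i := by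
  have : ((ContinuousLinearMap.pi fun i =>
      d i • (ContinuousLinearMap.proj i : (κ → ℝ) →L[ℝ] ℝ)) : (κ → ℝ) →ₗ[ℝ] κ → ℝ) =
      Matrix.toLin' (Matrix.diagonal d) := by
    ext v i
    simp [Matrix.toLin'_apply, Matrix.mulVec_diagonal]
  rw [ContinuousLinearMap.det, this, LinearMap.det_toLin', Matrix.det_diagonal]

theorem hasFDerivAt_pi_exp (t : κ → ℝ) :
    HasFDerivAt (fun t : κ → ℝ => fun i => rexp (t i))
      (ContinuousLinearMap.pi fun i =>
        rexp (t i) • (ContinuousLinearMap.proj i : (κ → ℝ) →L[ℝ] ℝ)) t :=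
  hasFDerivAt_pi'.2 fun i =>
    (ContinuousLinearMap.proj i : (κ → ℝ) →L[ℝ] ℝ).hasFDerivAt.exp

theorem integrableOn_posOrthant_iff_integrable_exp {E : Type*} [NormedAddCommGroup E]
    [NormedSpace ℝ E] (f : (κ → ℝ) → E) :
    IntegrableOn f (posOrthant κ) ↔
      Integrable fun t : κ → ℝ => rexp (∑ i, t i) • f fun i => rexp (t i) := by
  classical
  rw [posOrthant_eq_image_exp, integrableOn_image_iff_integrableOn_abs_det_fderiv_smul volume
    MeasurableSet.univ (fun t _ => (hasFDerivAt_pi_exp t).hasFDerivWithinAt)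
    (fun s _ t _ h => funext fun i => exp_injective (congrFun h i)), integrableOn_univ]
  simp_rw [det_pi_smul_proj, ← exp_sum, abs_of_pos (exp_pos _)]

theorem exists_forall_add_sum_abs_le_of_mem_interior_convexHull {A : ι → κ → ℝ} {c : κ → ℝ}
    (hc : c ∈ interior (convexHull ℝ (Set.range A))) :
    ∃ ε > 0, ∀ t : κ → ℝ, ∃ j, ∑ i, c i * t i + ε * ∑ i, |t i| ≤ ∑ i, A j i * t i := by
  obtain ⟨δ, hδ, hball⟩ := Metric.isOpen_iff.1 isOpen_interior c hc
  refine ⟨δ / 2, half_pos hδ, fun t => ?_⟩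
  -- `p` lies in the hull and `⟨p, t⟩ = ⟨c, t⟩ + (δ / 2) ‖t‖₁`; a linear form peaks at a vertex.
  set p : κ → ℝ := fun i => c i + δ / 2 * SignType.sign (t i)
  have hp : p ∈ convexHull ℝ (Set.range A) := by
    refine interior_subset (hball ?_)
    rw [Metric.mem_ball, dist_pi_lt_iff hδ]
    intro i
    rw [Real.dist_eq, add_sub_cancel_left, abs_mul, abs_of_pos (half_pos hδ)]
    calc δ / 2 * |(SignType.sign (t i) : ℝ)| ≤ δ / 2 * 1 := by
          gcongr; rcases SignType.sign (t i) with _ | _ | _ <;> simp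
      _ < δ := by linarith
  let ℓ : (κ → ℝ) →ₗ[ℝ] ℝ := ∑ i, t i • LinearMap.proj i
  have hℓ (y : κ → ℝ) : ℓ y = ∑ i, y i * t i := by simp [ℓ, mul_comm]
  obtain ⟨_, ⟨j, rfl⟩, hj⟩ := (ℓ.convexOn convex_univ).exists_ge_of_mem_convexHull
    (subset_univ _) hp
  refine ⟨j, ?_⟩
  calc ∑ i, c i * t i + δ / 2 * ∑ i, |t i| = ℓ p := by
        rw [hℓ, Finset.mul_sum, ← Finset.sum_add_distrib]
        refine Finset.sum_congr rfl fun i _ => ?_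
        rw [← sign_mul_self (t i)]
        ring
    _ ≤ ℓ (A j) := hj
    _ = ∑ i, A j i * t i := hℓ _

variable [Fintype ι]

def monomialSum (a : ι → κ → ℕ) (x : κ → ℝ) : ℝ := ∑ j, ∏ i, x i ^ (a j i)

noncomputable def realFeynmanIntegrand (a : ι → κ → ℕ) (b : κ → ℝ) (β : ℝ) (x : κ → ℝ) : ℝ :=
  (∏ i, x i ^ (b i - 1)) * monomialSum a x ^ (-β)

theorem monomialSum_pos [Nonempty ι] {a : ι → κ → ℕ} {x : κ → ℝ} (hx : x ∈ posOrthant κ) :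
    0 < monomialSum a x :=
  Finset.sum_pos (fun _ _ => Finset.prod_pos fun i _ => pow_pos (hx i) _) univ_nonempty

theorem integrableOn_realFeynmanIntegrand (a : ι → κ → ℕ) {b : κ → ℝ} {β : ℝ} (hβ : 0 < β)
    (hb : (fun i => b i / β) ∈ interior (newtonPolytope a)) :
    IntegrableOn (realFeynmanIntegrand a b β) (posOrthant κ) := by
  obtain ⟨ε, hε, hgap⟩ := exists_forall_add_sum_abs_le_of_mem_interior_convexHull hb
  have hsubst (t : κ → ℝ) :
      rexp (∑ i, t i) • realFeynmanIntegrand a b β (fun i => rexp (t i)) =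
        rexp (∑ i, b i * t i) * (∑ j, rexp (∑ i, a j i * t i)) ^ (-β) := by
    simp only [realFeynmanIntegrand, monomialSum, smul_eq_mul, ← exp_mul, ← exp_nat_mul,
      ← exp_sum, ← mul_assoc, ← exp_add, ← Finset.sum_add_distrib]
    congr 3; ext; ring
  have hbound (t : κ → ℝ) :
      ‖rexp (∑ i, b i * t i) * (∑ j, rexp (∑ i, a j i * t i)) ^ (-β)‖ ≤
        ∏ i, rexp (-(β * ε) * |t i|) := by
    obtain ⟨j, hj⟩ := hgap t
    have hsum : rexp (∑ i, a j i * t i) ≤ ∑ j, rexp (∑ i, a j i * t i) :=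
      Finset.single_le_sum (f := fun j => rexp (∑ i, a j i * t i)) (fun _ _ => (exp_pos _).le)
        (Finset.mem_univ j)
    have hb' : ∑ i, b i * t i = β * ∑ i, b i / β * t i := by
      rw [Finset.mul_sum]
      exact Finset.sum_congr rfl fun i _ => by field_simp
    rw [Real.norm_of_nonneg (by positivity), ← exp_sum]
    calc rexp (∑ i, b i * t i) * (∑ j, rexp (∑ i, a j i * t i)) ^ (-β)
        ≤ rexp (∑ i, b i * t i) * rexp (∑ i, a j i * t i) ^ (-β) :=
          mul_le_mul_of_nonneg_left
            (rpow_le_rpow_of_nonpos (exp_pos _) hsum (neg_nonpos.2 hβ.le)) (exp_pos _).le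
      _ = rexp (∑ i, b i * t i - β * ∑ i, a j i * t i) := by
          rw [← exp_mul, ← exp_add]; ring_nf
      _ ≤ rexp (∑ i, -(β * ε) * |t i|) := by
          rw [exp_le_exp, ← Finset.mul_sum, hb']
          nlinarith [mul_le_mul_of_nonneg_left hj hβ.le]
  rw [integrableOn_posOrthant_iff_integrable_exp]
  simp_rw [hsubst]
  exact Integrable.mono' (Integrable.fintype_prod fun _ => integrable_exp_neg_mul_abs
    (mul_pos hβ hε)) (Measurable.aestronglyMeasurable (by fun_prop)) (ae_of_all _ hbound)

noncomputable def feynmanPoly (a : ι → κ → ℕ) (c : ι → ℂ) (x : κ → ℝ) : ℂ :=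
  ∑ j, c j * ∏ i, (x i : ℂ) ^ (a j i)

/-- `J_A(ν̲, c) = Γ(ν₀) ∫_{posOrthant} feynmanIntegrand a c ν ν₀`. -/
noncomputable def feynmanIntegrand (a : ι → κ → ℕ) (c : ι → ℂ) (ν : κ → ℂ) (ν₀ : ℂ)
    (x : κ → ℝ) : ℂ :=
  (∏ i, (x i : ℂ) ^ (ν i - 1)) * feynmanPoly a c x ^ (-ν₀)

section feynmanPoly

variable {a : ι → κ → ℕ} {c : ι → ℂ} {x : κ → ℝ}

theorem re_feynmanPoly : (feynmanPoly a c x).re = ∑ j, (c j).re * ∏ i, x i ^ (a j i) := by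
  simp only [feynmanPoly, Complex.re_sum]
  refine Finset.sum_congr rfl fun j _ => ?_
  simp_rw [← Complex.ofReal_pow]
  rw [← Complex.ofReal_prod, Complex.re_mul_ofReal]

theorem mul_monomialSum_le_re_feynmanPoly {r : ℝ} (hc : ∀ j, r ≤ (c j).re)
    (hx : x ∈ posOrthant κ) : r * monomialSum a x ≤ (feynmanPoly a c x).re := by
  rw [re_feynmanPoly, monomialSum, Finset.mul_sum]
  exact Finset.sum_le_sum fun j _ => mul_le_mul_of_nonneg_right (hc j)
    (Finset.prod_nonneg fun i _ => pow_nonneg (hx i).le _)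

theorem re_feynmanPoly_pos [Nonempty ι] (hc : ∀ j, 0 < (c j).re) (hx : x ∈ posOrthant κ) :
    0 < (feynmanPoly a c x).re := by
  rw [re_feynmanPoly]
  exact Finset.sum_pos (fun j _ => mul_pos (hc j) (Finset.prod_pos fun i _ => pow_pos (hx i) _))
    univ_nonempty

end feynmanPoly

section feynmanIntegrand

variable {a : ι → κ → ℕ} {c : ι → ℂ} {ν : κ → ℂ} {μ : ℂ}

theorem norm_feynmanIntegrand_le [Nonempty ι] {r : ℝ} (hr : 0 < r) (hc : ∀ j, r ≤ (c j).re)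
    (hμ : 0 ≤ μ.re) {x : κ → ℝ} (hx : x ∈ posOrthant κ) :
    ‖feynmanIntegrand a c ν μ x‖ ≤ rexp (π / 2 * |μ.im|) * r ^ (-μ.re) *
      realFeynmanIntegrand a (fun i => (ν i).re) μ.re x := by
  have hS := monomialSum_pos (a := a) hx
  have hnorm : ‖∏ i, (x i : ℂ) ^ (ν i - 1)‖ = ∏ i, x i ^ ((ν i).re - 1) := by
    simp only [norm_prod, Complex.norm_cpow_eq_rpow_re_of_pos (hx _), Complex.sub_re,
      Complex.one_re]
  calc ‖feynmanIntegrand a c ν μ x‖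
      = (∏ i, x i ^ ((ν i).re - 1)) * ‖feynmanPoly a c x ^ (-μ)‖ := by
        rw [feynmanIntegrand, norm_mul, hnorm]
    _ ≤ (∏ i, x i ^ ((ν i).re - 1)) *
          (rexp (π / 2 * |μ.im|) * (r * monomialSum a x) ^ (-μ.re)) :=
        mul_le_mul_of_nonneg_left (norm_cpow_neg_le_of_le_re (mul_pos hr hS)
          (mul_monomialSum_le_re_feynmanPoly hc hx) hμ)
          (Finset.prod_nonneg fun i _ => rpow_nonneg (hx i).le _)
    _ = _ := by rw [realFeynmanIntegrand, mul_rpow hr.le hS.le]; ring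

theorem continuousOn_feynmanIntegrand [Nonempty ι] (hc : ∀ j, 0 < (c j).re) :
    ContinuousOn (feynmanIntegrand a c ν μ) (posOrthant κ) := by
  refine (continuousOn_finsetProd _ fun i _ => ?_).mul ?_
  · exact (by fun_prop : Continuous fun x : κ → ℝ => (x i : ℂ)).continuousOn.cpow
      continuousOn_const fun x hx => Complex.ofReal_mem_slitPlane.2 (hx i)
  · exact (by unfold feynmanPoly; fun_prop : Continuous (feynmanPoly a c)).continuousOn.cpow
      continuousOn_const fun x hx => Or.inl (re_feynmanPoly_pos hc hx)

theorem integrableOn_feynmanIntegrand (hc : ∀ j, 0 < (c j).re)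
    (hν : InConvergenceRegion a ν μ) :
    IntegrableOn (feynmanIntegrand a c ν μ) (posOrthant κ) := by
  have := nonempty_of_mem_interior_newtonPolytope hν.2
  obtain ⟨r, hr, hcr⟩ := exists_pos_forall_le_of_forall_pos hc
  exact Integrable.mono' ((integrableOn_realFeynmanIntegrand a hν.1 hν.2).const_mul _)
    ((continuousOn_feynmanIntegrand hc).aestronglyMeasurable isOpen_posOrthant.measurableSet)
    ((ae_restrict_iff' isOpen_posOrthant.measurableSet).2 <|
      ae_of_all _ fun x hx => norm_feynmanIntegrand_le hr hcr hν.1.le hx)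

end feynmanIntegrand

section derivative

variable [DecidableEq ι] {a : ι → κ → ℕ} {c : ι → ℂ} {ν : κ → ℂ} {μ : ℂ}

theorem hasDerivAt_feynmanPoly_update (j : ι) (x : κ → ℝ) (w : ℂ) :
    HasDerivAt (fun w => feynmanPoly a (Function.update c j w) x)
      (∏ i, (x i : ℂ) ^ (a j i)) w := by
  refine (HasDerivAt.fun_sum (u := univ) fun k _ =>
    (hasDerivAt_pi.1 (hasDerivAt_update c j w) k).mul_const
      (∏ i, (x i : ℂ) ^ (a k i))).congr_deriv ?_
  simp [Pi.single_apply]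

theorem prod_cpow_sub_one_mul_prod_pow {x : κ → ℝ} (hx : x ∈ posOrthant κ) (m : κ → ℕ) :
    (∏ i, (x i : ℂ) ^ (ν i - 1)) * ∏ i, (x i : ℂ) ^ (m i) =
      ∏ i, (x i : ℂ) ^ (ν i + m i - 1) := by
  rw [← Finset.prod_mul_distrib]
  refine Finset.prod_congr rfl fun i _ => ?_
  rw [← Complex.cpow_natCast, ← Complex.cpow_add _ _ (Complex.ofReal_ne_zero.2 (hx i).ne')]
  ring_nf

theorem hasDerivAt_feynmanIntegrand_update {x : κ → ℝ} (hx : x ∈ posOrthant κ) {j : ι}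
    {w : ℂ} (hG : 0 < (feynmanPoly a (Function.update c j w) x).re) :
    HasDerivAt (fun w => feynmanIntegrand a (Function.update c j w) ν μ x)
      (-μ * feynmanIntegrand a (Function.update c j w) (ν + fun i => (a j i : ℂ)) (μ + 1) x)
      w := by
  refine (((hasDerivAt_feynmanPoly_update j x w).cpow_const (c := -μ) (Or.inl hG)).const_mul
    (∏ i, (x i : ℂ) ^ (ν i - 1))).congr_deriv ?_
  simp only [feynmanIntegrand, Pi.add_apply]
  rw [← prod_cpow_sub_one_mul_prod_pow hx, show -μ - 1 = -(μ + 1) by ring]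
  ring

theorem hasDerivAt_integral_feynmanIntegrand_update (hc : ∀ k, 0 < (c k).re)
    (hν : InConvergenceRegion a ν μ) (j : ι) :
    HasDerivAt (fun w => ∫ x in posOrthant κ, feynmanIntegrand a (Function.update c j w) ν μ x)
      (-μ * ∫ x in posOrthant κ, feynmanIntegrand a c (ν + fun i => (a j i : ℂ)) (μ + 1) x)
      (c j) := by
  have := nonempty_of_mem_interior_newtonPolytope hν.2
  have hν' := hν.add_exponent j
  obtain ⟨r, hr, hcr⟩ := exists_pos_forall_le_of_forall_pos hc
  have hr2 : 0 < r / 2 := half_pos hr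
  have hball := Metric.ball_mem_nhds (c j) hr2
  have hmeas := isOpen_posOrthant (κ := κ) |>.measurableSet
  have hupd_pos (w) (hw : w ∈ Metric.ball (c j) (r / 2)) (k : ι) :
      0 < (Function.update c j w k).re :=
    hr2.trans_le (le_re_update_of_mem_ball hr.le hcr hw k)
  have hbound : ∀ x ∈ posOrthant κ, ∀ w ∈ Metric.ball (c j) (r / 2),
      ‖-μ * feynmanIntegrand a (Function.update c j w) (ν + fun i => (a j i : ℂ)) (μ + 1) x‖ ≤
        ‖μ‖ * (rexp (π / 2 * |(μ + 1).im|) * (r / 2) ^ (-(μ + 1).re) *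
          realFeynmanIntegrand a (fun i => (ν i + a j i).re) (μ + 1).re x) := by
    intro x hx w hw
    rw [norm_mul, norm_neg]
    exact mul_le_mul_of_nonneg_left (norm_feynmanIntegrand_le hr2
      (le_re_update_of_mem_ball hr.le hcr hw) hν'.1.le hx) (norm_nonneg _)
  have h := hasDerivAt_integral_of_dominated_loc_of_deriv_le hball
    (Filter.eventually_of_mem hball fun w hw =>
      (integrableOn_feynmanIntegrand (hupd_pos w hw) hν).aestronglyMeasurable)
    (by simp only [Function.update_eq_self]; exact integrableOn_feynmanIntegrand hc hν)
    (by simpa only [Function.update_eq_self] using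
      ((integrableOn_feynmanIntegrand hc hν').const_mul (-μ)).aestronglyMeasurable)
    ((ae_restrict_iff' hmeas).2 <| ae_of_all _ hbound)
    (((integrableOn_realFeynmanIntegrand a hν'.1 hν'.2).const_mul _).const_mul _)
    ((ae_restrict_iff' hmeas).2 <| ae_of_all _ fun x hx w hw =>
      hasDerivAt_feynmanIntegrand_update hx (re_feynmanPoly_pos (hupd_pos w hw) hx))
  simpa only [Function.update_eq_self, integral_const_mul] using h.2

end derivative

theorem feynman_toric_derivative_general (n N : ℕ)
    (a : Fin N → Fin n → ℕ)
    (z : Fin N → ℂ) (hz : ∀ j, 0 < (z j).re)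
    (ν₀ : ℂ) (ν : Fin n → ℂ) (hν₀ : 0 < ν₀.re)
    (hmem : (fun i => (ν i).re / ν₀.re) ∈
      interior (convexHull ℝ (Set.range fun j : Fin N => fun i : Fin n => (a j i : ℝ))))
    (j : Fin N) :
    IntegrableOn
        (fun x : Fin n → ℝ =>
          (∏ i, (x i : ℂ) ^ (ν i - 1)) *
            (∑ j', z j' * ∏ i, (x i : ℂ) ^ (a j' i)) ^ (-ν₀))
        {x : Fin n → ℝ | ∀ i, 0 < x i} volume ∧
      IntegrableOn
        (fun x : Fin n → ℝ =>
          (∏ i, (x i : ℂ) ^ (ν i + (a j i : ℂ) - 1)) *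
            (∑ j', z j' * ∏ i, (x i : ℂ) ^ (a j' i)) ^ (-(ν₀ + 1)))
        {x : Fin n → ℝ | ∀ i, 0 < x i} volume ∧
      HasDerivAt
        (fun w : ℂ => Complex.Gamma ν₀ *
          ∫ x in {x : Fin n → ℝ | ∀ i, 0 < x i},
            (∏ i, (x i : ℂ) ^ (ν i - 1)) *
              (∑ j', Function.update z j w j' * ∏ i, (x i : ℂ) ^ (a j' i)) ^ (-ν₀))
        (-(Complex.Gamma (ν₀ + 1) *
          ∫ x in {x : Fin n → ℝ | ∀ i, 0 < x i},
            (∏ i, (x i : ℂ) ^ (ν i + (a j i : ℂ) - 1)) *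
              (∑ j', z j' * ∏ i, (x i : ℂ) ^ (a j' i)) ^ (-(ν₀ + 1))))
        (z j) := by
  have hν : InConvergenceRegion a ν ν₀ := ⟨hν₀, hmem⟩
  refine ⟨integrableOn_feynmanIntegrand hz hν,
    integrableOn_feynmanIntegrand hz (hν.add_exponent j), ?_⟩
  refine ((hasDerivAt_integral_feynmanIntegrand_update hz hν j).const_mul
    (Complex.Gamma ν₀)).congr_deriv ?_
  change _ = -(Complex.Gamma (ν₀ + 1) * ∫ x in posOrthant (Fin n),
    feynmanIntegrand a z (ν + fun i => (a j i : ℂ)) (ν₀ + 1) x)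
  rw [Complex.Gamma_add_one ν₀ (fun h => by simp [h] at hν₀)]
  ring

/-- Toric derivative identity: on the region of absolute convergence,
`∂J_A(ν̲, z)/∂zⱼ = −J_A((ν₀+1, ν+aⱼ), z)`, where both generalized Feynman integrals
converge absolutely. -/
theorem feynman_toric_derivative (n N : ℕ) (hn : 1 ≤ n) (hN : n + 1 ≤ N)
    (a : Fin N → Fin n → ℕ)
    (z : Fin N → ℂ) (hz : ∀ j, 0 < (z j).re)
    (ν₀ : ℂ) (ν : Fin n → ℂ) (hν₀ : 0 < ν₀.re)
    (hmem : (fun i => (ν i).re / ν₀.re) ∈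
      interior (convexHull ℝ (Set.range fun j : Fin N => fun i : Fin n => (a j i : ℝ))))
    (j : Fin N) :
    IntegrableOn
        (fun x : Fin n → ℝ =>
          (∏ i, (x i : ℂ) ^ (ν i - 1)) *
            (∑ j', z j' * ∏ i, (x i : ℂ) ^ (a j' i)) ^ (-ν₀))
        {x : Fin n → ℝ | ∀ i, 0 < x i} volume ∧
      IntegrableOn
        (fun x : Fin n → ℝ =>
          (∏ i, (x i : ℂ) ^ (ν i + (a j i : ℂ) - 1)) *
            (∑ j', z j' * ∏ i, (x i : ℂ) ^ (a j' i)) ^ (-(ν₀ + 1)))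
        {x : Fin n → ℝ | ∀ i, 0 < x i} volume ∧
      HasDerivAt
        (fun w : ℂ => Complex.Gamma ν₀ *
          ∫ x in {x : Fin n → ℝ | ∀ i, 0 < x i},
            (∏ i, (x i : ℂ) ^ (ν i - 1)) *
              (∑ j', Function.update z j w j' * ∏ i, (x i : ℂ) ^ (a j' i)) ^ (-ν₀))
        (-(Complex.Gamma (ν₀ + 1) *
          ∫ x in {x : Fin n → ℝ | ∀ i, 0 < x i},
            (∏ i, (x i : ℂ) ^ (ν i + (a j i : ℂ) - 1)) *
              (∑ j', z j' * ∏ i, (x i : ℂ) ^ (a j' i)) ^ (-(ν₀ + 1))))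
        (z j) :=
  feynman_toric_derivative_general n N a z hz ν₀ ν hν₀ hmem j
end

section
/- For every complex number C there exist real constants κ > 0 and R > 0 such that for all integers M, 1/|Γ(C+M)| ≤ κ · R^{|M|} · |M|^{−M}, where Γ is the complex Gamma function, |M|^{−M} is interpreted as the real power (|M| : ℝ)^{(−M : ℝ)} with the convention 0^0 = 1, and 1/|Γ(C+M)| is interpreted as 0 whenever C+M is a pole of Γ (i.e. a nonpositive integer). -/
open Complex

private lemma gamma_inv_rec (z : ℂ) :
    (Complex.Gamma z)⁻¹ = z * (Complex.Gamma (z + 1))⁻¹ := by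
  by_cases hz : z = 0
  · simp [hz, Complex.Gamma_zero]
  · rw [Complex.Gamma_add_one z hz]
    by_cases hG : Complex.Gamma z = 0
    · simp [hG]
    · field_simp

private lemma pow_le_exp_mul_factorial (n : ℕ) :
    (n : ℝ) ^ n ≤ Real.exp 1 ^ n * n.factorial := by
  induction n with
  | zero => simp
  | succ n ih =>
    have key : ((n : ℝ) + 1) ^ n ≤ Real.exp 1 * (n : ℝ) ^ n := by
      rcases Nat.eq_zero_or_pos n with h | h
      · simp [h, Real.one_le_exp (by norm_num : (0:ℝ) ≤ 1)]
      · have hn : (0 : ℝ) < n := by exact_mod_cast h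
        have h1 : (n : ℝ) + 1 ≤ (n : ℝ) * Real.exp (1 / n) := by
          have := Real.add_one_le_exp (1 / (n : ℝ))
          calc (n : ℝ) + 1 = (n : ℝ) * (1 / n + 1) := by field_simp; ring
            _ ≤ (n : ℝ) * Real.exp (1 / n) := mul_le_mul_of_nonneg_left this hn.le
        calc ((n : ℝ) + 1) ^ n ≤ ((n : ℝ) * Real.exp (1 / n)) ^ n :=
              pow_le_pow_left₀ (by positivity) h1 n
          _ = (n : ℝ) ^ n * Real.exp (1 / n) ^ n := mul_pow _ _ _
          _ = (n : ℝ) ^ n * Real.exp 1 := by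
              rw [← Real.exp_nat_mul]
              congr 1
              field_simp
          _ = Real.exp 1 * (n : ℝ) ^ n := mul_comm _ _
    have hnn : (0:ℝ) ≤ (n:ℝ) + 1 := by positivity
    calc ((n + 1 : ℕ) : ℝ) ^ (n + 1) = ((n : ℝ) + 1) * ((n : ℝ) + 1) ^ n := by
          push_cast; ring
      _ ≤ ((n : ℝ) + 1) * (Real.exp 1 * (n : ℝ) ^ n) :=
          mul_le_mul_of_nonneg_left key hnn
      _ ≤ ((n : ℝ) + 1) * (Real.exp 1 * (Real.exp 1 ^ n * n.factorial)) := by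
          refine mul_le_mul_of_nonneg_left ?_ hnn
          exact mul_le_mul_of_nonneg_left ih (Real.exp_pos 1).le
      _ = Real.exp 1 ^ (n + 1) * ((n + 1).factorial) := by
          rw [Nat.factorial_succ]
          push_cast
          ring

private lemma factorial_le_pow_mul_factorial {k n : ℕ} (h : k ≤ n) :
    n.factorial ≤ n ^ k * (n - k).factorial := by
  rw [← Nat.factorial_mul_descFactorial h, mul_comm]
  exact Nat.mul_le_mul_right _ (Nat.descFactorial_le_pow n k)

set_option maxHeartbeats 1000000 in
/-- For every complex `C` there are `κ, R > 0` such that for all integers `M`,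
`1/|Γ(C+M)| ≤ κ · R^{|M|} · |M|^{−M}` (with `0^0 = 1` and `1/|Γ| = 0` at the poles,
where `Complex.Gamma` vanishes). -/
theorem gamma_reciprocal_bound (C : ℂ) :
    ∃ κ R : ℝ, 0 < κ ∧ 0 < R ∧ ∀ M : ℤ,
      ‖(Complex.Gamma (C + (M : ℂ)))⁻¹‖ ≤
        κ * R ^ M.natAbs * ((|M| : ℤ) : ℝ) ^ (-(M : ℝ)) := by
  -- the shift
  set k₀ : ℕ := ⌈|C.re|⌉₊ + 1 with hk₀
  set D : ℂ := C + k₀ with hD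
  have hDre : 1 ≤ D.re := by
    have h1 : |C.re| ≤ (⌈|C.re|⌉₊ : ℝ) := Nat.le_ceil _
    have h2 : -C.re ≤ |C.re| := neg_le_abs _
    simp only [hD, Complex.add_re, Complex.natCast_re, hk₀]
    push_cast
    linarith
  have hc : 0 < ‖Complex.Gamma D‖ := by
    rw [norm_pos_iff]
    exact Complex.Gamma_ne_zero_of_re_pos (by linarith)
  set c : ℝ := ‖Complex.Gamma D‖ with hcdef
  -- lower bound for Gamma on the right of D
  have hpos : ∀ m : ℕ, (m.factorial : ℝ) * c ≤ ‖Complex.Gamma (D + m)‖ := by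
    intro m
    induction m with
    | zero =>
      simp only [Nat.cast_zero, add_zero, Nat.factorial_zero, Nat.cast_one, one_mul]
      exact hcdef.le
    | succ m ih =>
      have hre : 1 + (m : ℝ) ≤ (D + m).re := by
        simp only [Complex.add_re, Complex.natCast_re]
        linarith
      have hne : D + m ≠ 0 := by
        intro h
        rw [h] at hre
        simp only [Complex.zero_re] at hre
        have : (0:ℝ) ≤ m := by positivity
        linarith
      have heq : Complex.Gamma (D + (m + 1 : ℕ)) = (D + m) * Complex.Gamma (D + m) := by
        rw [show (D + ((m + 1 : ℕ) : ℂ) : ℂ) = (D + m) + 1 by push_cast; ring]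
        exact Complex.Gamma_add_one _ hne
      have hnorm : ((m : ℝ) + 1) ≤ ‖(D + m : ℂ)‖ := by
        calc ((m : ℝ) + 1) ≤ (D + m).re := by linarith
          _ ≤ |(D + m).re| := le_abs_self _
          _ ≤ ‖(D + m : ℂ)‖ := Complex.abs_re_le_norm _
      rw [heq, norm_mul]
      calc ((m + 1).factorial : ℝ) * c = ((m : ℝ) + 1) * ((m.factorial : ℝ) * c) := by
            rw [Nat.factorial_succ]; push_cast; ring
        _ ≤ ‖(D + m : ℂ)‖ * ‖Complex.Gamma (D + m)‖ :=
            mul_le_mul hnorm ih (by positivity) (norm_nonneg _)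
  -- bound on the left of C
  have hneg : ∀ m : ℕ, ‖(Complex.Gamma (C - m))⁻¹‖ ≤
      (‖C‖ + m) ^ m * ‖(Complex.Gamma C)⁻¹‖ := by
    intro m
    induction m with
    | zero => simp
    | succ m ih =>
      have heq : (Complex.Gamma (C - (m + 1 : ℕ)))⁻¹
          = (C - (m + 1 : ℕ)) * (Complex.Gamma (C - m))⁻¹ := by
        rw [gamma_inv_rec (C - (m + 1 : ℕ))]
        congr 2
        push_cast; ring
      rw [heq, norm_mul]
      have h1 : ‖(C - (m + 1 : ℕ) : ℂ)‖ ≤ ‖C‖ + ((m : ℝ) + 1) := by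
        calc ‖(C - (m + 1 : ℕ) : ℂ)‖ ≤ ‖C‖ + ‖((m + 1 : ℕ) : ℂ)‖ := norm_sub_le _ _
          _ = ‖C‖ + ((m : ℝ) + 1) := by rw [Complex.norm_natCast]; push_cast; ring
      calc ‖(C - (m + 1 : ℕ) : ℂ)‖ * ‖(Complex.Gamma (C - m))⁻¹‖
          ≤ (‖C‖ + ((m : ℝ) + 1)) * ((‖C‖ + m) ^ m * ‖(Complex.Gamma C)⁻¹‖) :=
            mul_le_mul h1 ih (by positivity) (by positivity)
        _ ≤ (‖C‖ + ((m : ℝ) + 1)) * ((‖C‖ + ((m : ℝ) + 1)) ^ m * ‖(Complex.Gamma C)⁻¹‖) := by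
            apply mul_le_mul_of_nonneg_left _ (by positivity)
            apply mul_le_mul_of_nonneg_right _ (norm_nonneg _)
            apply pow_le_pow_left₀ (by positivity)
            linarith
        _ = (‖C‖ + ((m + 1 : ℕ) : ℝ)) ^ (m + 1) * ‖(Complex.Gamma C)⁻¹‖ := by push_cast; ring
  -- constants
  set κ₀ : ℝ := ∑ n ∈ Finset.range k₀,
      ‖(Complex.Gamma (C + n))⁻¹‖ * (n : ℝ) ^ n with hκ₀
  have hκ₀nn : 0 ≤ κ₀ := Finset.sum_nonneg fun n _ => by positivity
  set R : ℝ := Real.exp 1 * 2 ^ k₀ + (‖C‖ + 1) with hR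
  have hbasenn : (0:ℝ) ≤ Real.exp 1 * 2 ^ k₀ := by positivity
  have hR1 : 1 ≤ R := by
    have := norm_nonneg C
    simp only [hR]
    linarith
  have hRpos : 0 < R := by linarith
  set κ : ℝ := 1 / c + ‖(Complex.Gamma C)⁻¹‖ + κ₀ + 1 with hκ
  have hκpos : 0 < κ := by
    have h1 : 0 < 1 / c := by positivity
    have h2 := norm_nonneg ((Complex.Gamma C)⁻¹)
    simp only [hκ]
    linarith
  refine ⟨κ, R, hκpos, hRpos, fun M => ?_⟩
  rcases le_or_gt 0 M with hM | hM
  · -- M = n ≥ 0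
    obtain ⟨n, rfl⟩ := Int.eq_ofNat_of_zero_le hM
    have habs : ((|(n : ℤ)| : ℤ) : ℝ) = (n : ℝ) := by
      rw [Int.abs_natCast]; push_cast; ring
    have hnatAbs : (n : ℤ).natAbs = n := Int.natAbs_natCast n
    have hcastn : ((n : ℤ) : ℂ) = (n : ℂ) := by push_cast; ring
    rw [habs, hnatAbs, hcastn]
    have hrpow : ((n : ℝ)) ^ (-((n : ℤ) : ℝ)) * (n : ℝ) ^ n = 1 := by
      rcases Nat.eq_zero_or_pos n with h | h
      · simp [h]
      · have hn0 : (0 : ℝ) < n := by exact_mod_cast h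
        rw [show (-((n : ℤ) : ℝ)) = -((n : ℕ) : ℝ) by push_cast; ring,
          Real.rpow_neg hn0.le, Real.rpow_natCast]
        field_simp
    have hrpow_nn : 0 ≤ ((n : ℝ)) ^ (-((n : ℤ) : ℝ)) := Real.rpow_nonneg (by positivity) _
    rcases lt_or_ge n k₀ with hn | hn
    · -- small n : use the sum bound
      have hterm : ‖(Complex.Gamma (C + n))⁻¹‖ * (n : ℝ) ^ n ≤ κ₀ :=
        Finset.single_le_sum (f := fun n : ℕ => ‖(Complex.Gamma (C + n))⁻¹‖ * (n : ℝ) ^ n)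
          (fun i _ => by positivity) (Finset.mem_range.mpr hn)
      have hRn : (1 : ℝ) ≤ R ^ n := one_le_pow₀ hR1
      have hκ₀κ : κ₀ ≤ κ := by
        have h1 : 0 ≤ 1 / c := by positivity
        have h2 := norm_nonneg ((Complex.Gamma C)⁻¹)
        simp only [hκ]
        linarith
      calc ‖(Complex.Gamma (C + (n : ℂ)))⁻¹‖
          = (‖(Complex.Gamma (C + n))⁻¹‖ * (n : ℝ) ^ n) * ((n : ℝ)) ^ (-((n : ℤ) : ℝ)) := by
            rw [mul_assoc, mul_comm ((n : ℝ) ^ n), hrpow, mul_one]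
        _ ≤ (κ * R ^ n) * ((n : ℝ)) ^ (-((n : ℤ) : ℝ)) := by
            apply mul_le_mul_of_nonneg_right _ hrpow_nn
            calc ‖(Complex.Gamma (C + n))⁻¹‖ * (n : ℝ) ^ n ≤ κ₀ := hterm
              _ = κ₀ * 1 := (mul_one _).symm
              _ ≤ κ * R ^ n := mul_le_mul hκ₀κ hRn (by norm_num) hκpos.le
        _ = κ * R ^ n * ((n : ℝ)) ^ (-((n : ℤ) : ℝ)) := by ring
    · -- large n
      have hn1 : 1 ≤ n := le_trans (by omega) hn
      have hn0 : (0 : ℝ) < n := by exact_mod_cast Nat.lt_of_lt_of_le Nat.zero_lt_one hn1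
      have hrpow_inv : ((n : ℝ)) ^ (-((n : ℤ) : ℝ)) = ((n : ℝ) ^ n)⁻¹ :=
        eq_inv_of_mul_eq_one_left hrpow
      have key : ((n - k₀).factorial : ℝ) * c ≤ ‖Complex.Gamma (C + n)‖ := by
        have hDeq : (C + n : ℂ) = D + ((n - k₀ : ℕ) : ℂ) := by
          simp only [hD]
          push_cast [Nat.cast_sub hn]
          ring
        rw [hDeq]
        exact hpos _
      have hfac_pos : (0 : ℝ) < ((n - k₀).factorial : ℝ) * c := by positivity
      have hinv : ‖(Complex.Gamma (C + (n : ℂ)))⁻¹‖ ≤ (((n - k₀).factorial : ℝ) * c)⁻¹ := by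
        rw [norm_inv]
        exact inv_anti₀ hfac_pos key
      -- chain: n^n ≤ (e 2^k₀)^n (n-k₀)!
      have hchain : (n : ℝ) ^ n ≤ (Real.exp 1 * 2 ^ k₀) ^ n * ((n - k₀).factorial : ℝ) := by
        have h1 : (n : ℝ) ^ n ≤ Real.exp 1 ^ n * n.factorial := pow_le_exp_mul_factorial n
        have h2 : (n.factorial : ℝ) ≤ (n : ℝ) ^ k₀ * ((n - k₀).factorial : ℝ) := by
          exact_mod_cast Nat.cast_le.mpr (factorial_le_pow_mul_factorial hn)
        have h3 : (n : ℝ) ^ k₀ ≤ ((2 : ℝ) ^ k₀) ^ n := by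
          calc (n : ℝ) ^ k₀ ≤ ((2 : ℝ) ^ n) ^ k₀ := by
                apply pow_le_pow_left₀ (by positivity)
                exact_mod_cast (Nat.lt_two_pow_self (n := n)).le
            _ = ((2 : ℝ) ^ k₀) ^ n := by rw [← pow_mul, ← pow_mul, Nat.mul_comm]
        calc (n : ℝ) ^ n ≤ Real.exp 1 ^ n * n.factorial := h1
          _ ≤ Real.exp 1 ^ n * ((n : ℝ) ^ k₀ * ((n - k₀).factorial : ℝ)) :=
              mul_le_mul_of_nonneg_left h2 (by positivity)
          _ ≤ Real.exp 1 ^ n * (((2:ℝ) ^ k₀) ^ n * ((n - k₀).factorial : ℝ)) := by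
              apply mul_le_mul_of_nonneg_left _ (by positivity)
              exact mul_le_mul_of_nonneg_right h3 (by positivity)
          _ = (Real.exp 1 * 2 ^ k₀) ^ n * ((n - k₀).factorial : ℝ) := by
              rw [mul_pow]; ring
      have hchain2 : (n : ℝ) ^ n ≤ (((n - k₀).factorial : ℝ) * c) * (κ * R ^ n) := by
        have hcκ : (1 : ℝ) ≤ κ * c := by
          have h2 : 1 / c ≤ κ := by
            have := norm_nonneg ((Complex.Gamma C)⁻¹)
            simp only [hκ]
            linarith
          calc (1 : ℝ) = (1 / c) * c := by field_simp
            _ ≤ κ * c := mul_le_mul_of_nonneg_right h2 hc.le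
        have hbase : (Real.exp 1 * 2 ^ k₀ : ℝ) ≤ R := by
          have := norm_nonneg C
          simp only [hR]
          linarith
        calc (n : ℝ) ^ n ≤ (Real.exp 1 * 2 ^ k₀) ^ n * ((n - k₀).factorial : ℝ) := hchain
          _ ≤ R ^ n * ((n - k₀).factorial : ℝ) :=
              mul_le_mul_of_nonneg_right (pow_le_pow_left₀ hbasenn hbase n) (by positivity)
          _ = 1 * (R ^ n * ((n - k₀).factorial : ℝ)) := by ring
          _ ≤ (κ * c) * (R ^ n * ((n - k₀).factorial : ℝ)) :=
              mul_le_mul_of_nonneg_right hcκ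
                (mul_nonneg (pow_nonneg hRpos.le n) (by positivity))
          _ = (((n - k₀).factorial : ℝ) * c) * (κ * R ^ n) := by ring
      have hfin : (((n - k₀).factorial : ℝ) * c)⁻¹ * (n : ℝ) ^ n ≤ κ * R ^ n := by
        rw [inv_mul_le_iff₀ hfac_pos]
        exact hchain2
      calc ‖(Complex.Gamma (C + (n : ℂ)))⁻¹‖ ≤ (((n - k₀).factorial : ℝ) * c)⁻¹ := hinv
        _ = ((((n - k₀).factorial : ℝ) * c)⁻¹ * (n : ℝ) ^ n) * ((n : ℝ) ^ n)⁻¹ := by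
            field_simp
        _ ≤ (κ * R ^ n) * ((n : ℝ) ^ n)⁻¹ :=
            mul_le_mul_of_nonneg_right hfin (by positivity)
        _ = κ * R ^ n * ((n : ℝ)) ^ (-((n : ℤ) : ℝ)) := by rw [hrpow_inv]
  · -- M = -m < 0
    obtain ⟨m, hm, rfl⟩ : ∃ m : ℕ, 0 < m ∧ M = -(m : ℤ) :=
      ⟨M.natAbs, by omega, by omega⟩
    have hnatAbs : (-(m : ℤ)).natAbs = m := by simp
    have habs : ((|(-(m : ℤ))| : ℤ) : ℝ) = (m : ℝ) := by
      rw [abs_neg, Int.abs_natCast]; push_cast; ring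
    have hcast : (C + ((-(m : ℤ) : ℤ) : ℂ)) = C - m := by push_cast; ring
    have hrpow : ((m : ℝ)) ^ (-((-(m:ℤ) : ℤ) : ℝ)) = (m : ℝ) ^ m := by
      rw [show (-((-(m:ℤ) : ℤ) : ℝ)) = ((m : ℕ) : ℝ) by push_cast; ring, Real.rpow_natCast]
    rw [hnatAbs, habs, hcast, hrpow]
    have h1 : ‖(Complex.Gamma (C - m))⁻¹‖ ≤ (‖C‖ + m) ^ m * ‖(Complex.Gamma C)⁻¹‖ := hneg m
    have h2 : (‖C‖ + m : ℝ) ≤ (‖C‖ + 1) * m := by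
      have hm1 : (1 : ℝ) ≤ m := by exact_mod_cast hm
      nlinarith [norm_nonneg C]
    have h3 : ((‖C‖ + m) : ℝ) ^ m ≤ R ^ m * (m : ℝ) ^ m := by
      calc ((‖C‖ + m) : ℝ) ^ m ≤ ((‖C‖ + 1) * m) ^ m := pow_le_pow_left₀ (by positivity) h2 m
        _ = (‖C‖ + 1) ^ m * (m : ℝ) ^ m := mul_pow _ _ _
        _ ≤ R ^ m * (m : ℝ) ^ m := by
            apply mul_le_mul_of_nonneg_right _ (by positivity)
            apply pow_le_pow_left₀ (by positivity)
            simp only [hR]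
            linarith
    have h4 : ‖(Complex.Gamma C)⁻¹‖ ≤ κ := by
      have h5 : 0 ≤ 1 / c := by positivity
      simp only [hκ]
      linarith
    calc ‖(Complex.Gamma (C - m))⁻¹‖ ≤ (‖C‖ + m) ^ m * ‖(Complex.Gamma C)⁻¹‖ := h1
      _ ≤ (R ^ m * (m : ℝ) ^ m) * κ := by
          exact mul_le_mul h3 h4 (norm_nonneg _)
            (mul_nonneg (pow_nonneg hRpos.le m) (pow_nonneg (by positivity) m))
      _ = κ * R ^ m * (m : ℝ) ^ m := by ring
end

section
/- Let N, r ≥ 1 be integers, let C ∈ ℤ^{N×r} be an integer matrix each of whose columns sums to zero (∑_{i=1}^N C_{ij} = 0 for every j), and let a ∈ ℂ^N. Then there exists ε > 0 such that for every x ∈ ℂ^r with |x_j| < ε for all j, the family indexed by λ ∈ ℕ^r of terms (∏_{j=1}^r x_j^{λ_j}) · ∏_{i=1}^N (Γ(a_i + ∑_{j=1}^r C_{ij} λ_j))^{−1} is absolutely summable, where the reciprocal of Γ is taken to be 0 at the poles of Γ. -/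
/-!
For `m ∈ ℤ`, `1/Γ(a + m)` is at most `K B^|m| (-m)₊! / m₊!`: upwards this follows from
`1/Γ(z) = z/Γ(z+1)` once `Re z ≥ 1`, downwards from the same recurrence and
`|a - k| ≤ (1 + |a|) k`. On the hyperplane `∑ᵢ mᵢ = 0` the positive and negative parts of `m`
have the same total size `P`, so `∏ (-mᵢ)₊! ≤ P! ≤ N^P ∏ (mᵢ)₊!` by the multinomial bound and the
factorials cancel up to an exponential factor. For `m = Cλ` the terms of the Γ-series are then
dominated by `K ∏ⱼ (|xⱼ| D^c)^λⱼ`, a product of geometric series.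
-/

open Complex Finset

open scoped Nat

theorem Nat.factorial_sum_le_card_pow_mul_prod_factorial {ι : Type*} [Fintype ι]
    (f : ι → ℕ) : (∑ i, f i)! ≤ Fintype.card ι ^ (∑ i, f i) * ∏ i, (f i)! := by
  classical
  have h_multinomial_le :
      Nat.multinomial (univ : Finset ι) f ≤ Fintype.card ι ^ (∑ i, f i) := by
    have h := sum_pow_eq_sum_piAntidiag (univ : Finset ι) (fun _ => (1 : ℕ)) (∑ i, f i)
    simp only [sum_const, smul_eq_mul, mul_one, one_pow, prod_const_one, Nat.cast_id] at h
    rw [← Finset.card_univ, h]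
    exact single_le_sum (fun _ _ => Nat.zero_le _) (by simp)
  rw [← Nat.multinomial_spec, mul_comm]
  exact Nat.mul_le_mul_right _ h_multinomial_le

theorem Int.prod_factorial_toNat_neg_le_of_sum_eq_zero {ι : Type*} [Fintype ι] {m : ι → ℤ}
    (hm : ∑ i, m i = 0) :
    ∏ i, ((-m i).toNat)! ≤ Fintype.card ι ^ (∑ i, (m i).toNat) * ∏ i, ((m i).toNat)! := by
  have h_sum : ∑ i, (-m i).toNat = ∑ i, (m i).toNat := by
    have h := congrArg (fun g : ι → ℤ => ∑ i, g i)
      (funext fun i => Int.toNat_sub_toNat_neg (m i))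
    simp only [sum_sub_distrib, hm] at h
    exact_mod_cast (sub_eq_zero.mp h).symm
  calc ∏ i, ((-m i).toNat)! ≤ (∑ i, (-m i).toNat)! :=
        Nat.le_of_dvd (Nat.factorial_pos _) (Nat.prod_factorial_dvd_factorial_sum _ _)
    _ = (∑ i, (m i).toNat)! := by rw [h_sum]
    _ ≤ _ := Nat.factorial_sum_le_card_pow_mul_prod_factorial _

theorem summable_prod_pow {ι : Type*} [Fintype ι] {q : ι → ℝ} (hq₀ : ∀ i, 0 ≤ q i)
    (hq₁ : ∀ i, q i < 1) : Summable fun n : ι → ℕ => ∏ i, q i ^ n i := by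
  classical
  refine summable_of_sum_le (c := ∏ i, (1 - q i)⁻¹)
    (fun n => prod_nonneg fun i _ => pow_nonneg (hq₀ i) _) fun s => ?_
  set M := s.sup (fun n => univ.sup n) + 1
  have h_box : s ⊆ Fintype.piFinset fun _ => range M := fun n hn => by
    simp only [Fintype.mem_piFinset, mem_range]
    exact fun i => Nat.lt_succ_of_le
      ((le_sup (mem_univ i)).trans (le_sup (f := fun n => univ.sup n) hn))
  calc ∑ n ∈ s, ∏ i, q i ^ n i
      ≤ ∑ n ∈ Fintype.piFinset (fun _ => range M), ∏ i, q i ^ n i :=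
        sum_le_sum_of_subset_of_nonneg h_box fun n _ _ =>
          prod_nonneg fun i _ => pow_nonneg (hq₀ i) _
    _ = ∏ i, ∑ k ∈ range M, q i ^ k := (prod_univ_sum _ _).symm
    _ ≤ ∏ i, (1 - q i)⁻¹ := by
        refine prod_le_prod (fun i _ => sum_nonneg fun k _ => pow_nonneg (hq₀ i) _)
          fun i _ => ?_
        rw [← tsum_geometric_of_lt_one (hq₀ i) (hq₁ i)]
        exact (summable_geometric_of_lt_one (hq₀ i) (hq₁ i)).sum_le_tsum _
          fun k _ => pow_nonneg (hq₀ i) _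

theorem Matrix.sum_natAbs_sum_mul_le {m n : Type*} [Fintype m] [Fintype n] (C : Matrix m n ℤ)
    (v : n → ℕ) :
    ∑ i, (∑ j, C i j * (v j : ℤ)).natAbs ≤ (∑ i, ∑ j, (C i j).natAbs) * ∑ j, v j := by
  rw [sum_mul]
  refine sum_le_sum fun i _ => (Int.natAbs_sum_le _ _).trans ?_
  rw [sum_mul]
  refine sum_le_sum fun j _ => ?_
  rw [Int.natAbs_mul, Int.natAbs_natCast]
  exact Nat.mul_le_mul_left _ (single_le_sum (fun _ _ => Nat.zero_le _) (mem_univ j))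

namespace Complex

theorem inv_Gamma_eq_prod_mul_inv_Gamma_add_nat (z : ℂ) (n : ℕ) :
    (Gamma z)⁻¹ = (∏ k ∈ range n, (z + k)) * (Gamma (z + n))⁻¹ := by
  induction n with
  | zero => simp
  | succ n ih =>
    rw [ih, prod_range_succ, one_div_Gamma_eq_self_mul_one_div_Gamma_add_one (z + n)]
    push_cast
    ring_nf

theorem norm_inv_Gamma_add_nat_mul_factorial_le {b : ℂ} (hb : 1 ≤ b.re) (n : ℕ) :
    ‖(Gamma (b + n))⁻¹‖ * n ! ≤ ‖(Gamma b)⁻¹‖ := by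
  rw [inv_Gamma_eq_prod_mul_inv_Gamma_add_nat b n, norm_mul, norm_prod, mul_comm,
    ← prod_range_add_one_eq_factorial]
  push_cast
  gcongr with k
  calc (k : ℝ) + 1 ≤ (b + k).re := by simp only [add_re, natCast_re]; linarith
    _ ≤ ‖b + k‖ := re_le_norm _

theorem norm_inv_Gamma_sub_nat_le (a : ℂ) (n : ℕ) :
    ‖(Gamma (a - n))⁻¹‖ ≤ ‖(Gamma a)⁻¹‖ * (1 + ‖a‖) ^ n * n ! := by
  induction n with
  | zero => simp
  | succ n ih =>
    have h_step := one_div_Gamma_eq_self_mul_one_div_Gamma_add_one (a - (n + 1))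
    rw [show a - (n + 1) + 1 = a - n by ring] at h_step
    have h_norm : ‖a - (n + 1)‖ ≤ (1 + ‖a‖) * (n + 1) := by
      have := norm_sub_le a ((n : ℂ) + 1)
      rw [show (n : ℂ) + 1 = ((n + 1 : ℕ) : ℂ) by push_cast; ring, norm_natCast] at this
      push_cast at this
      nlinarith [norm_nonneg a]
    push_cast
    rw [h_step, norm_mul]
    calc ‖a - (n + 1)‖ * ‖(Gamma (a - n))⁻¹‖
        ≤ ((1 + ‖a‖) * (n + 1)) * (‖(Gamma a)⁻¹‖ * (1 + ‖a‖) ^ n * n !) := by gcongr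
      _ = ‖(Gamma a)⁻¹‖ * (1 + ‖a‖) ^ (n + 1) * (n + 1)! := by
        push_cast [Nat.factorial_succ]; ring

theorem exists_norm_inv_Gamma_add_nat_mul_factorial_le (a : ℂ) :
    ∃ K, ∀ n : ℕ, ‖(Gamma (a + n))⁻¹‖ * n ! ≤ K * 2 ^ n := by
  obtain ⟨n₀, hn₀⟩ := exists_nat_ge (1 - a.re)
  have hb : 1 ≤ (a + n₀).re := by simp only [add_re, natCast_re]; linarith
  set K := ∑ k ∈ range n₀, ‖(Gamma (a + k))⁻¹‖ * k ! + ‖(Gamma (a + n₀))⁻¹‖ * (n₀)!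
  have hK : 0 ≤ K := by positivity
  refine ⟨K, fun n => ?_⟩
  rcases lt_or_ge n n₀ with hn | hn
  · calc ‖(Gamma (a + n))⁻¹‖ * n ! ≤ ∑ k ∈ range n₀, ‖(Gamma (a + k))⁻¹‖ * k ! :=
          single_le_sum (f := fun k : ℕ => ‖(Gamma (a + k))⁻¹‖ * k !)
            (fun _ _ => by positivity) (mem_range.mpr hn)
      _ ≤ K := le_add_of_nonneg_right (by positivity)
      _ ≤ K * 2 ^ n := le_mul_of_one_le_right hK (one_le_pow₀ one_le_two)
  · obtain ⟨p, rfl⟩ := Nat.exists_eq_add_of_le hn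
    have h_fact : ((n₀ + p)! : ℝ) ≤ 2 ^ (n₀ + p) * (n₀ ! * p !) := by
      have := Nat.factorial_sum_le_card_pow_mul_prod_factorial ![n₀, p]
      simp only [Fin.sum_univ_two, Fin.prod_univ_two, Fintype.card_fin] at this
      exact_mod_cast this
    calc ‖(Gamma (a + (n₀ + p : ℕ)))⁻¹‖ * (n₀ + p)!
        ≤ ‖(Gamma (a + n₀ + p))⁻¹‖ * (2 ^ (n₀ + p) * (n₀ ! * p !)) := by
          push_cast; rw [← add_assoc]; gcongr
      _ = ‖(Gamma (a + n₀ + p))⁻¹‖ * p ! * n₀ ! * 2 ^ (n₀ + p) := by ring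
      _ ≤ ‖(Gamma (a + n₀))⁻¹‖ * n₀ ! * 2 ^ (n₀ + p) := by
          gcongr; exact norm_inv_Gamma_add_nat_mul_factorial_le hb p
      _ ≤ K * 2 ^ (n₀ + p) := by gcongr; exact le_add_of_nonneg_left (by positivity)

theorem exists_norm_inv_Gamma_add_int_mul_factorial_le (a : ℂ) :
    ∃ K B : ℝ, 0 ≤ K ∧ 1 ≤ B ∧ ∀ m : ℤ,
      ‖(Gamma (a + m))⁻¹‖ * (m.toNat)! ≤ K * B ^ m.natAbs * ((-m).toNat)! := by
  obtain ⟨K₀, hK₀⟩ := exists_norm_inv_Gamma_add_nat_mul_factorial_le a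
  refine ⟨max K₀ ‖(Gamma a)⁻¹‖, max 2 (1 + ‖a‖), (norm_nonneg _).trans (le_max_right _ _),
    one_le_two.trans (le_max_left _ _), fun m => ?_⟩
  obtain ⟨n, rfl | rfl⟩ := Int.eq_nat_or_neg m
  · simp only [Int.toNat_natCast, Int.natAbs_natCast, Int.cast_natCast, Int.toNat_neg_natCast,
      Nat.factorial_zero, Nat.cast_one, mul_one]
    calc ‖(Gamma (a + n))⁻¹‖ * n ! ≤ K₀ * 2 ^ n := hK₀ n
      _ ≤ max K₀ ‖(Gamma a)⁻¹‖ * max 2 (1 + ‖a‖) ^ n := by gcongr <;> simp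
  · simp only [Int.toNat_neg_natCast, neg_neg, Int.toNat_natCast, Int.natAbs_neg,
      Int.natAbs_natCast, Int.cast_neg, Int.cast_natCast, Nat.factorial_zero, Nat.cast_one,
      mul_one, ← sub_eq_add_neg]
    calc ‖(Gamma (a - n))⁻¹‖ ≤ ‖(Gamma a)⁻¹‖ * (1 + ‖a‖) ^ n * n ! :=
          norm_inv_Gamma_sub_nat_le a n
      _ ≤ max K₀ ‖(Gamma a)⁻¹‖ * max 2 (1 + ‖a‖) ^ n * n ! := by gcongr <;> simp

theorem exists_prod_norm_inv_Gamma_add_le {ι : Type*} [Fintype ι] (a : ι → ℂ) :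
    ∃ K D : ℝ, 0 ≤ K ∧ 1 ≤ D ∧ ∀ m : ι → ℤ, ∑ i, m i = 0 →
      ∏ i, ‖(Gamma (a i + m i))⁻¹‖ ≤ K * D ^ ∑ i, (m i).natAbs := by
  choose K B hK hB hKB using fun i => exists_norm_inv_Gamma_add_int_mul_factorial_le (a i)
  set B₀ := 1 + ∑ i, B i
  have hB₀ : ∀ i, B i ≤ B₀ := fun i =>
    (single_le_sum (fun j _ => zero_le_one.trans (hB j)) (mem_univ i)).trans
      (le_add_of_nonneg_left zero_le_one)
  have hB₀_one : 1 ≤ B₀ := le_add_of_nonneg_right (sum_nonneg fun i _ => zero_le_one.trans (hB i))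
  refine ⟨∏ i, K i, (Fintype.card ι + 1) * B₀, prod_nonneg fun i _ => hK i,
    one_le_mul_of_one_le_of_one_le (by simp) hB₀_one, fun m hm => ?_⟩
  have h_fact_pos : (0 : ℝ) < ∏ i, (((m i).toNat)! : ℝ) := by positivity
  have h_multinomial : ∏ i, (((-m i).toNat)! : ℝ) ≤
      (Fintype.card ι + 1) ^ (∑ i, (m i).natAbs) * ∏ i, (((m i).toNat)! : ℝ) := by
    calc ∏ i, (((-m i).toNat)! : ℝ)
        ≤ Fintype.card ι ^ (∑ i, (m i).toNat) * ∏ i, (((m i).toNat)! : ℝ) := by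
          exact_mod_cast Int.prod_factorial_toNat_neg_le_of_sum_eq_zero hm
      _ ≤ (Fintype.card ι + 1) ^ (∑ i, (m i).toNat) * ∏ i, (((m i).toNat)! : ℝ) := by
          gcongr; linarith
      _ ≤ _ := by
          gcongr
          · linarith [Fintype.card ι]
          · omega
  rw [← mul_le_mul_iff_of_pos_right h_fact_pos, ← prod_mul_distrib]
  calc ∏ i, ‖(Gamma (a i + m i))⁻¹‖ * ((m i).toNat)!
      ≤ ∏ i, K i * B₀ ^ (m i).natAbs * ((-m i).toNat)! := by
        refine prod_le_prod (fun i _ => by positivity) fun i _ => (hKB i (m i)).trans ?_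
        gcongr
        exacts [hK i, zero_le_one.trans (hB i), hB₀ i]
    _ = (∏ i, K i) * B₀ ^ (∑ i, (m i).natAbs) * ∏ i, (((-m i).toNat)! : ℝ) := by
        rw [prod_mul_distrib, prod_mul_distrib, prod_pow_eq_pow_sum]
    _ ≤ (∏ i, K i) * B₀ ^ (∑ i, (m i).natAbs) *
          ((Fintype.card ι + 1) ^ (∑ i, (m i).natAbs) * ∏ i, (((m i).toNat)! : ℝ)) := by
        gcongr
        exact mul_nonneg (prod_nonneg fun i _ => hK i) (by positivity)
    _ = _ := by rw [mul_pow]; ring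

end Complex

theorem gamma_series_abs_convergence_general (N r : ℕ)
    (C : Matrix (Fin N) (Fin r) ℤ) (hC : ∀ j, ∑ i, C i j = 0) (a : Fin N → ℂ) :
    ∃ ε : ℝ, 0 < ε ∧ ∀ x : Fin r → ℂ, (∀ j, ‖x j‖ < ε) →
      Summable fun lam : Fin r → ℕ =>
        ‖(∏ j, x j ^ lam j) *
          ∏ i, (Complex.Gamma (a i + ((∑ j, C i j * (lam j : ℤ) : ℤ) : ℂ)))⁻¹‖ := by
  obtain ⟨K, D, hK, hD, h_bound⟩ := Complex.exists_prod_norm_inv_Gamma_add_le a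
  set c := ∑ i, ∑ j, (C i j).natAbs
  have hDc : 0 < D ^ c := by positivity
  refine ⟨(D ^ c)⁻¹, inv_pos.mpr hDc, fun x hx => ?_⟩
  have hq : ∀ j, ‖x j‖ * D ^ c < 1 := fun j => by
    simpa [inv_mul_cancel₀ hDc.ne'] using mul_lt_mul_of_pos_right (hx j) hDc
  refine Summable.of_nonneg_of_le (fun _ => norm_nonneg _) (fun lam => ?_)
    ((summable_prod_pow (fun j => by positivity) hq).mul_left K)
  have h_sum_zero : ∑ i, ∑ j, C i j * (lam j : ℤ) = 0 := by
    rw [sum_comm]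
    simp [← sum_mul, hC]
  calc ‖(∏ j, x j ^ lam j) * ∏ i, (Gamma (a i + ((∑ j, C i j * (lam j : ℤ) : ℤ) : ℂ)))⁻¹‖
      = (∏ j, ‖x j‖ ^ lam j) *
          ∏ i, ‖(Gamma (a i + ((∑ j, C i j * (lam j : ℤ) : ℤ) : ℂ)))⁻¹‖ := by
        simp only [norm_mul, norm_prod, norm_pow]
    _ ≤ (∏ j, ‖x j‖ ^ lam j) * (K * D ^ (c * ∑ j, lam j)) := by
        gcongr
        exact (h_bound _ h_sum_zero).trans
          (by gcongr; exact Matrix.sum_natAbs_sum_mul_le C lam)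
    _ = K * ∏ j, (‖x j‖ * D ^ c) ^ lam j := by
        simp only [pow_mul, ← prod_pow_eq_pow_sum, mul_pow, prod_mul_distrib]
        ring

/-- Convergence of Γ-series: if every column of the integer matrix `C` sums to zero,
then for all `x` of sufficiently small absolute value the family
`λ ↦ x^λ · ∏ᵢ Γ(aᵢ + (Cλ)ᵢ)⁻¹` (λ ∈ ℕ^r) is absolutely summable. -/
theorem gamma_series_abs_convergence (N r : ℕ) (hN : 1 ≤ N) (hr : 1 ≤ r)
    (C : Matrix (Fin N) (Fin r) ℤ) (hC : ∀ j, ∑ i, C i j = 0) (a : Fin N → ℂ) :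
    ∃ ε : ℝ, 0 < ε ∧ ∀ x : Fin r → ℂ, (∀ j, ‖x j‖ < ε) →
      Summable fun lam : Fin r → ℕ =>
        ‖(∏ j, x j ^ lam j) *
          ∏ i, (Complex.Gamma (a i + ((∑ j, C i j * (lam j : ℤ) : ℤ) : ℂ)))⁻¹‖ :=
  gamma_series_abs_convergence_general N r C hC a
end
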